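/- arXiv:2409.14409 — 8 statements merged into one kernel-verified Lean document; each statement's English description precedes it below -/
import Mathlib

section
/- For positive integers a ≥ b and J ≥ 3, H(a+b, J) ≤ H(a,J) + H(b,J−1) + b. -/
/-- A finite set of naturals is a Golomb ruler: all differences of
distinct pairs are distinct. -/
def IsGolomb (A : Finset ℕ) : Prop :=
  ∀ a ∈ A, ∀ b ∈ A, ∀ c ∈ A, ∀ d ∈ A,
    a ≠ b → c ≠ d → (a : ℤ) - b = (c : ℤ) - d → a = c ∧ b = d

/-- `F` is a family of `I` pairwise disjoint `J`-element Golomb rulers,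
each contained in `{1, ..., n}`: an `(I,J,n)`-DGR. -/
def IsDGR (I J n : ℕ) (F : Fin I → Finset ℕ) : Prop :=
  (∀ i, (F i).card = J) ∧ (∀ i, IsGolomb (F i)) ∧
  (∀ i, F i ⊆ Finset.Icc 1 n) ∧
  (∀ i j, i ≠ j → Disjoint (F i) (F j))

/-- `H I J` is the least positive `n` such that an `(I,J,n)`-DGR exists. -/
noncomputable def H (I J : ℕ) : ℕ :=
  sInf {n | 0 < n ∧ ∃ F : Fin I → Finset ℕ, IsDGR I J n F}

/-- `A` contains `I` pairwise disjoint `J`-element Golomb rulers. -/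
def HasDGRin (I J : ℕ) (A : Finset ℕ) : Prop :=
  ∃ F : Fin I → Finset ℕ,
    (∀ i, (F i).card = J) ∧ (∀ i, IsGolomb (F i)) ∧
    (∀ i, F i ⊆ A) ∧ (∀ i j, i ≠ j → Disjoint (F i) (F j))

/-- The defining set for `Y I J`. -/
def YSet (I J : ℕ) : Set ℕ :=
  {n | 0 < n ∧ ∀ A : Finset ℕ, (∀ a ∈ A, 0 < a) → A.card = n → HasDGRin I J A}

/-- `Y I J` is the least positive `n` such that every set of `n`
positive integers contains `I` disjoint `J`-element Golomb rulers. -/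
noncomputable def Y (I J : ℕ) : ℕ := sInf (YSet I J)

-- ordered two-power lemma
lemma aux_le (p s r q : ℕ) (hps : p < s) (hrq : r < q)
    (h : 2^p + 2^s = 2^r + 2^q) (hle : p ≤ r) : p = r := by
  by_contra hpr
  have hpr' : p + 1 ≤ r := by omega
  have d1 : (2:ℕ)^(p+1) ∣ 2^r := pow_dvd_pow 2 hpr'
  have d2 : (2:ℕ)^(p+1) ∣ 2^q := pow_dvd_pow 2 (by omega)
  have d3 : (2:ℕ)^(p+1) ∣ 2^s := pow_dvd_pow 2 (by omega)
  have hsub : (2:ℕ)^p = 2^r + 2^q - 2^s := by omega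
  have : (2:ℕ)^(p+1) ∣ 2^p := hsub ▸ Nat.dvd_sub (dvd_add d1 d2) d3
  have := (Nat.pow_dvd_pow_iff_le_right (by norm_num)).1 this
  omega

lemma aux_ord (p s r q : ℕ) (hps : p < s) (hrq : r < q)
    (h : 2^p + 2^s = 2^r + 2^q) : p = r ∧ s = q := by
  have hpr : p = r := by
    rcases le_total p r with hle | hle
    · exact aux_le p s r q hps hrq h hle
    · exact (aux_le r q p s hrq hps h.symm hle).symm
  subst hpr
  have : (2:ℕ)^s = 2^q := by omega
  exact ⟨rfl, Nat.pow_right_injective (by norm_num) this⟩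

lemma aux_ne (p r q : ℕ) (hrq : r ≠ q) : 2^(p+1) ≠ 2^r + 2^q := by
  intro h
  -- wlog r < q
  rcases lt_or_gt_of_ne hrq with hlt | hlt
  · rcases le_or_gt (r+1) (p+1) with hle | hle
    · have d1 : (2:ℕ)^(r+1) ∣ 2^(p+1) := pow_dvd_pow 2 hle
      have d2 : (2:ℕ)^(r+1) ∣ 2^q := pow_dvd_pow 2 (by omega)
      have hsub : (2:ℕ)^r = 2^(p+1) - 2^q := by omega
      have : (2:ℕ)^(r+1) ∣ 2^r := hsub ▸ Nat.dvd_sub d1 d2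
      have := (Nat.pow_dvd_pow_iff_le_right (by norm_num)).1 this
      omega
    · have h1 : (2:ℕ)^(p+1) ≤ 2^r := Nat.pow_le_pow_right (by norm_num) (by omega)
      have h2 : (1:ℕ) ≤ 2^q := Nat.one_le_two_pow
      omega
  · rcases le_or_gt (q+1) (p+1) with hle | hle
    · have d1 : (2:ℕ)^(q+1) ∣ 2^(p+1) := pow_dvd_pow 2 hle
      have d2 : (2:ℕ)^(q+1) ∣ 2^r := pow_dvd_pow 2 (by omega)
      have hsub : (2:ℕ)^q = 2^(p+1) - 2^r := by omega
      have : (2:ℕ)^(q+1) ∣ 2^q := hsub ▸ Nat.dvd_sub d1 d2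
      have := (Nat.pow_dvd_pow_iff_le_right (by norm_num)).1 this
      omega
    · have h1 : (2:ℕ)^(p+1) ≤ 2^q := Nat.pow_le_pow_right (by norm_num) (by omega)
      have h2 : (1:ℕ) ≤ 2^r := Nat.one_le_two_pow
      omega

lemma two_pow_eq (p q r s : ℕ) (hpq : p ≠ q) (hrs : r ≠ s)
    (h : 2^p + 2^s = 2^r + 2^q) : p = r ∧ q = s := by
  by_cases hps : p = s
  · subst hps
    have h' : (2:ℕ)^(p+1) = 2^r + 2^q := by rw [pow_succ]; omega
    by_cases hrq : r = q
    · subst hrq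
      have : (2:ℕ)^(p+1) = 2^(r+1) := by rw [h', pow_succ]; omega
      have := Nat.pow_right_injective (le_refl 2) this
      omega
    · exact absurd h' (aux_ne p r q hrq)
  · by_cases hrq : r = q
    · subst hrq
      have h' : (2:ℕ)^(r+1) = 2^p + 2^s := by rw [pow_succ]; omega
      exact absurd h' (aux_ne r p s hps)
    · rcases lt_or_gt_of_ne hps with h1 | h1 <;> rcases lt_or_gt_of_ne hrq with h2 | h2
      · obtain ⟨e1, e2⟩ := aux_ord p s r q h1 h2 h
        exact ⟨e1, e2.symm⟩
      · obtain ⟨e1, e2⟩ := aux_ord p s q r h1 h2 (by omega)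
        omega
      · obtain ⟨e1, e2⟩ := aux_ord s p r q h1 h2 (by omega)
        omega
      · obtain ⟨e1, e2⟩ := aux_ord s p q r h1 h2 (by omega)
        omega

lemma golomb_powers (J : ℕ) : IsGolomb ((Finset.range J).image (2 ^ ·)) := by
  intro a ha b hb c hc d hd hab hcd heq
  obtain ⟨p, -, rfl⟩ := Finset.mem_image.1 ha
  obtain ⟨q, -, rfl⟩ := Finset.mem_image.1 hb
  obtain ⟨r, -, rfl⟩ := Finset.mem_image.1 hc
  obtain ⟨s, -, rfl⟩ := Finset.mem_image.1 hd
  have hpq : p ≠ q := fun h => hab (by rw [h])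
  have hrs : r ≠ s := fun h => hcd (by rw [h])
  have hnat : (2:ℕ)^p + 2^s = 2^r + 2^q := by
    have : (2:ℤ)^p + 2^s = 2^r + 2^q := by push_cast at heq; linarith
    exact_mod_cast this
  obtain ⟨e1, e2⟩ := two_pow_eq p q r s hpq hrs hnat
  subst e1; subst e2; exact ⟨rfl, rfl⟩

lemma golomb_image_add (A : Finset ℕ) (t : ℕ) (hA : IsGolomb A) :
    IsGolomb (A.image (· + t)) := by
  intro a ha b hb c hc d hd hab hcd heq
  obtain ⟨a', ha', rfl⟩ := Finset.mem_image.1 ha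
  obtain ⟨b', hb', rfl⟩ := Finset.mem_image.1 hb
  obtain ⟨c', hc', rfl⟩ := Finset.mem_image.1 hc
  obtain ⟨d', hd', rfl⟩ := Finset.mem_image.1 hd
  have := hA a' ha' b' hb' c' hc' d' hd' (by omega) (by omega) (by push_cast at heq ⊢; linarith)
  omega

lemma golomb_subset {A B : Finset ℕ} (hBA : B ⊆ A) (hA : IsGolomb A) : IsGolomb B :=
  fun a ha b hb c hc d hd => hA a (hBA ha) b (hBA hb) c (hBA hc) d (hBA hd)

lemma golomb_insert (A : Finset ℕ) (m M : ℕ) (hA : IsGolomb A)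
    (hbd : ∀ x ∈ A, 1 ≤ x ∧ x ≤ m) (hM : 2*m < M) : IsGolomb (insert M A) := by
  intro a ha b hb c hc d hd hab hcd heq
  by_cases h4 : a ∈ A ∧ b ∈ A ∧ c ∈ A ∧ d ∈ A
  · exact hA a h4.1 b h4.2.1 c h4.2.2.1 d h4.2.2.2 hab hcd heq
  · have Da : a = M ∨ (1 ≤ a ∧ a ≤ m) := (Finset.mem_insert.1 ha).imp id (hbd a)
    have Db : b = M ∨ (1 ≤ b ∧ b ≤ m) := (Finset.mem_insert.1 hb).imp id (hbd b)
    have Dc : c = M ∨ (1 ≤ c ∧ c ≤ m) := (Finset.mem_insert.1 hc).imp id (hbd c)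
    have Dd : d = M ∨ (1 ≤ d ∧ d ≤ m) := (Finset.mem_insert.1 hd).imp id (hbd d)
    have hsome : a = M ∨ b = M ∨ c = M ∨ d = M := by
      rcases Finset.mem_insert.1 ha with h | h; · exact Or.inl h
      rcases Finset.mem_insert.1 hb with h' | h'; · exact Or.inr (Or.inl h')
      rcases Finset.mem_insert.1 hc with h'' | h''; · exact Or.inr (Or.inr (Or.inl h''))
      rcases Finset.mem_insert.1 hd with h''' | h'''; · exact Or.inr (Or.inr (Or.inr h'''))
      exact absurd ⟨h, h', h'', h'''⟩ h4
    omega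

lemma dgr_nonempty (I J : ℕ) :
    {n | 0 < n ∧ ∃ F : Fin I → Finset ℕ, IsDGR I J n F}.Nonempty := by
  refine ⟨I * 2^J + 1, Nat.succ_pos _, fun i => ((Finset.range J).image (2 ^ ·)).image (· + (i:ℕ) * 2^J), ?_, ?_, ?_, ?_⟩
  · intro i
    rw [Finset.card_image_of_injective _ (add_left_injective _),
      Finset.card_image_of_injective _ (Nat.pow_right_injective (le_refl 2)),
      Finset.card_range]
  · intro i
    exact golomb_image_add _ _ (golomb_powers J)
  · intro i x hx
    obtain ⟨y, hy, rfl⟩ := Finset.mem_image.1 hx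
    obtain ⟨k, hk, rfl⟩ := Finset.mem_image.1 hy
    have h1 : (1:ℕ) ≤ 2^k := Nat.one_le_two_pow
    have h2 : (2:ℕ)^k ≤ 2^J := Nat.pow_le_pow_right (by norm_num) (by simpa using (Finset.mem_range.1 hk).le)
    have h3 : ((i:ℕ)+1) * 2^J ≤ I * 2^J := Nat.mul_le_mul_right _ (by have := i.isLt; omega)
    simp only [Finset.mem_Icc]
    constructor
    · omega
    · have : 2^k + (i:ℕ) * 2^J ≤ ((i:ℕ)+1) * 2^J := by
        rw [add_mul, one_mul]; omega
      omega
  · intro i j hij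
    rw [Finset.disjoint_left]
    intro x hx hx'
    obtain ⟨y, hy, rfl⟩ := Finset.mem_image.1 hx
    obtain ⟨k, hk, rfl⟩ := Finset.mem_image.1 hy
    obtain ⟨y', hy', hEq⟩ := Finset.mem_image.1 hx'
    obtain ⟨l, hl, rfl⟩ := Finset.mem_image.1 hy'
    have h1 : (1:ℕ) ≤ 2^k := Nat.one_le_two_pow
    have h2 : (2:ℕ)^k ≤ 2^J := Nat.pow_le_pow_right (by norm_num) (by simpa using (Finset.mem_range.1 hk).le)
    have h1' : (1:ℕ) ≤ 2^l := Nat.one_le_two_pow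
    have h2' : (2:ℕ)^l ≤ 2^J := Nat.pow_le_pow_right (by norm_num) (by simpa using (Finset.mem_range.1 hl).le)
    have hij' : (i:ℕ) ≠ (j:ℕ) := fun h => hij (Fin.ext h)
    rcases lt_or_gt_of_ne hij' with h | h
    · have : ((i:ℕ)+1) * 2^J ≤ (j:ℕ) * 2^J := Nat.mul_le_mul_right _ (by omega)
      rw [add_mul, one_mul] at this
      omega
    · have : ((j:ℕ)+1) * 2^J ≤ (i:ℕ) * 2^J := Nat.mul_le_mul_right _ (by omega)
      rw [add_mul, one_mul] at this
      omega

lemma H_spec (I J : ℕ) : 0 < H I J ∧ ∃ F : Fin I → Finset ℕ, IsDGR I J (H I J) F :=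
  Nat.sInf_mem (dgr_nonempty I J)

lemma H_le {I J n : ℕ} (h1 : 0 < n) (h2 : ∃ F : Fin I → Finset ℕ, IsDGR I J n F) :
    H I J ≤ n := Nat.sInf_le ⟨h1, h2⟩

lemma H_mono {a b J : ℕ} (hab : b ≤ a) (hJ : 3 ≤ J) :
    H b (J-1) ≤ H a J := by
  obtain ⟨hn, F, hFc, hFg, hFs, hFd⟩ := H_spec a J
  have hne : ∀ i : Fin b, (F (Fin.castLE hab i)).Nonempty := by
    intro i
    rw [← Finset.card_pos, hFc]; omega
  refine H_le hn ⟨fun i => (F (Fin.castLE hab i)).erase ((F (Fin.castLE hab i)).min' (hne i)), ?_, ?_, ?_, ?_⟩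
  · intro i
    rw [Finset.card_erase_of_mem (Finset.min'_mem _ _), hFc]
  · intro i
    exact golomb_subset (Finset.erase_subset _ _) (hFg _)
  · intro i
    exact (Finset.erase_subset _ _).trans (hFs _)
  · intro i j hij
    exact Finset.disjoint_of_subset_left (Finset.erase_subset _ _)
      (Finset.disjoint_of_subset_right (Finset.erase_subset _ _)
        (hFd _ _ (fun h => hij (Fin.ext (by simpa using congrArg Fin.val h)))))

theorem H_add_mixed (a b J : ℕ) (hb : 0 < b) (hab : b ≤ a) (hJ : 3 ≤ J) :
    H (a + b) J ≤ H a J + H b (J - 1) + b := by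
  obtain ⟨hn, F, hFc, hFg, hFs, hFd⟩ := H_spec a J
  obtain ⟨hm, G, hGc, hGg, hGs, hGd⟩ := H_spec b (J-1)
  set n := H a J with hn_def
  set m := H b (J-1) with hm_def
  have hmn : m ≤ n := H_mono hab hJ
  have hGbd : ∀ i : Fin b, ∀ x ∈ G i, 1 ≤ x ∧ x ≤ m := by
    intro i x hx
    simpa using Finset.mem_Icc.1 (hGs i hx)
  have hFbd : ∀ i : Fin a, ∀ x ∈ F i, 1 ≤ x ∧ x ≤ n := by
    intro i x hx
    simpa using Finset.mem_Icc.1 (hFs i hx)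
  refine H_le (by omega) ⟨fun i =>
    if h : (i:ℕ) < a then (F ⟨i, h⟩).image (· + m)
    else insert (n + m + 1 + ((i:ℕ) - a)) (G ⟨(i:ℕ) - a, by have := i.isLt; omega⟩),
    ?_, ?_, ?_, ?_⟩
  · intro i
    dsimp only
    by_cases h : (i:ℕ) < a
    · rw [dif_pos h, Finset.card_image_of_injective _ (add_left_injective _), hFc]
    · rw [dif_neg h, Finset.card_insert_of_notMem, hGc]
      · omega
      · intro hmem
        have := hGbd _ _ hmem
        omega
  · intro i
    dsimp only
    by_cases h : (i:ℕ) < a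
    · rw [dif_pos h]
      exact golomb_image_add _ _ (hFg _)
    · rw [dif_neg h]
      exact golomb_insert _ m _ (hGg _) (hGbd _) (by omega)
  · intro i x hx
    dsimp only at hx
    by_cases h : (i:ℕ) < a
    · rw [dif_pos h] at hx
      obtain ⟨y, hy, rfl⟩ := Finset.mem_image.1 hx
      have := hFbd _ _ hy
      simp only [Finset.mem_Icc]; omega
    · rw [dif_neg h] at hx
      rcases Finset.mem_insert.1 hx with rfl | hx'
      · have := i.isLt
        simp only [Finset.mem_Icc]; omega
      · have := hGbd _ _ hx'
        simp only [Finset.mem_Icc]; omega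
  · intro i j hij
    have hij' : (i:ℕ) ≠ (j:ℕ) := fun h => hij (Fin.ext h)
    rw [Finset.disjoint_left]
    intro x hx hx'
    dsimp only at hx hx'
    by_cases h : (i:ℕ) < a <;> by_cases h' : (j:ℕ) < a
    · rw [dif_pos h] at hx; rw [dif_pos h'] at hx'
      obtain ⟨y, hy, rfl⟩ := Finset.mem_image.1 hx
      obtain ⟨y', hy', hEq⟩ := Finset.mem_image.1 hx'
      have : y = y' := by omega
      subst this
      exact Finset.disjoint_left.1 (hFd ⟨i, h⟩ ⟨j, h'⟩ (fun hh => hij' (by simpa using congrArg Fin.val hh))) hy hy'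
    · rw [dif_pos h] at hx; rw [dif_neg h'] at hx'
      obtain ⟨y, hy, rfl⟩ := Finset.mem_image.1 hx
      have hy1 := hFbd _ _ hy
      rcases Finset.mem_insert.1 hx' with hEq | hx''
      · omega
      · have := hGbd _ _ hx''
        omega
    · rw [dif_neg h] at hx; rw [dif_pos h'] at hx'
      obtain ⟨y, hy, hEq⟩ := Finset.mem_image.1 hx'
      have hy1 := hFbd _ _ hy
      rcases Finset.mem_insert.1 hx with hEq' | hx''
      · omega
      · have := hGbd _ _ hx''
        omega
    · rw [dif_neg h] at hx; rw [dif_neg h'] at hx'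
      rcases Finset.mem_insert.1 hx with rfl | hx1 <;> rcases Finset.mem_insert.1 hx' with hEq | hx2
      · omega
      · have := hGbd _ _ hx2; omega
      · have := hGbd _ _ hx1; omega
      · refine Finset.disjoint_left.1 (hGd ⟨(i:ℕ)-a, by have := i.isLt; omega⟩
          ⟨(j:ℕ)-a, by have := j.isLt; omega⟩ ?_) hx1 hx2
        intro hh
        have := congrArg Fin.val hh
        simp only at this
        omega
end

section
/- For positive integers a and J ≥ 3, H(2a−1, J) ≤ H(a,J) + H(a−1,J−1) + a − 1. -/
lemma golomb_subset_s5 {S T : Finset ℕ} (h : S ⊆ T) (hT : IsGolomb T) : IsGolomb S :=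
  fun a ha b hb c hc d hd => hT a (h ha) b (h hb) c (h hc) d (h hd)

lemma golomb_shift {S : Finset ℕ} (t : ℕ) (h : IsGolomb S) :
    IsGolomb (S.image (· + t)) := by
  intro p hp q hq r hr s hs hpq hrs heq
  simp only [Finset.mem_image] at hp hq hr hs
  obtain ⟨p', hp', rfl⟩ := hp
  obtain ⟨q', hq', rfl⟩ := hq
  obtain ⟨r', hr', rfl⟩ := hr
  obtain ⟨s', hs', rfl⟩ := hs
  have h1 : p' ≠ q' := by omega
  have h2 : r' ≠ s' := by omega
  have heq' : (p' : ℤ) - q' = r' - s' := by push_cast at heq; omega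
  obtain ⟨e1, e2⟩ := h p' hp' q' hq' r' hr' s' hs' h1 h2 heq'
  omega

lemma golomb_insert_s5 {S : Finset ℕ} {L x : ℕ} (hS : S ⊆ Finset.Icc 1 L)
    (hG : IsGolomb S) (hx : 2 * L < x) : IsGolomb (insert x S) := by
  have hb : ∀ w ∈ S, 1 ≤ w ∧ w ≤ L := fun w hw => Finset.mem_Icc.1 (hS hw)
  intro p hp q hq r hr s hs hpq hrs heq
  rw [Finset.mem_insert] at hp hq hr hs
  by_cases hall : p ∈ S ∧ q ∈ S ∧ r ∈ S ∧ s ∈ S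
  · exact hG p hall.1 q hall.2.1 r hall.2.2.1 s hall.2.2.2 hpq hrs heq
  · have hx4 : p = x ∨ q = x ∨ r = x ∨ s = x := by tauto
    have Bp : p = x ∨ (1 ≤ p ∧ p ≤ L) := hp.imp id (hb p)
    have Bq : q = x ∨ (1 ≤ q ∧ q ≤ L) := hq.imp id (hb q)
    have Br : r = x ∨ (1 ≤ r ∧ r ≤ L) := hr.imp id (hb r)
    have Bs : s = x ∨ (1 ≤ s ∧ s ≤ L) := hs.imp id (hb s)
    omega

lemma dgr_mono_I {I I' J n : ℕ} (h : I' ≤ I) {F : Fin I → Finset ℕ} (hF : IsDGR I J n F) :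
    IsDGR I' J n (fun i => F (Fin.castLE h i)) := by
  obtain ⟨h1, h2, h3, h4⟩ := hF
  exact ⟨fun i => h1 _, fun i => h2 _, fun i => h3 _,
    fun i j hij => h4 _ _ (fun hh => hij (Fin.castLE_injective h hh))⟩

lemma dgr_mono_J {I J n : ℕ} (hJ : 0 < J) {F : Fin I → Finset ℕ} (hF : IsDGR I J n F) :
    ∃ F', IsDGR I (J - 1) n F' := by
  obtain ⟨h1, h2, h3, h4⟩ := hF
  have hne : ∀ i, (F i).Nonempty := fun i => Finset.card_pos.1 (by rw [h1]; exact hJ)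
  refine ⟨fun i => (F i).erase ((F i).min' (hne i)), fun i => ?_,
    fun i => golomb_subset_s5 (Finset.erase_subset _ _) (h2 i),
    fun i => (Finset.erase_subset _ _).trans (h3 i),
    fun i j hij => (h4 i j hij).mono (Finset.erase_subset _ _) (Finset.erase_subset _ _)⟩
  rw [Finset.card_erase_of_mem (Finset.min'_mem _ _), h1]

lemma combine {a J nA nB : ℕ} (ha : 1 ≤ a) (hBA : nB ≤ nA) (hJ : 1 ≤ J)
    {A : Fin a → Finset ℕ} (hA : IsDGR a J nA A)
    {B : Fin (a - 1) → Finset ℕ} (hB : IsDGR (a - 1) (J - 1) nB B) :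
    ∃ F, IsDGR (2 * a - 1) J (nA + nB + (a - 1)) F := by
  obtain ⟨hA1, hA2, hA3, hA4⟩ := hA
  obtain ⟨hB1, hB2, hB3, hB4⟩ := hB
  have hBel : ∀ (k : Fin (a - 1)) w, w ∈ B k → 1 ≤ w ∧ w ≤ nB :=
    fun k w hw => Finset.mem_Icc.1 (hB3 k hw)
  have hAel : ∀ (k : Fin a) w, w ∈ A k → 1 ≤ w ∧ w ≤ nA :=
    fun k w hw => Finset.mem_Icc.1 (hA3 k hw)
  refine ⟨fun i => if h : (i : ℕ) < a - 1 then insert (nA + nB + ((i : ℕ) + 1)) (B ⟨i, h⟩)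
    else (A ⟨(i : ℕ) - (a - 1), by have := i.isLt; omega⟩).image (· + nB), ?_, ?_, ?_, ?_⟩
  · intro i
    by_cases h : (i : ℕ) < a - 1
    · simp only [dif_pos h]
      rw [Finset.card_insert_of_notMem (fun hmem => by have := hBel _ _ hmem; omega), hB1]
      omega
    · simp only [dif_neg h]
      rw [Finset.card_image_of_injective _ (add_left_injective nB), hA1]
  · intro i
    by_cases h : (i : ℕ) < a - 1
    · simp only [dif_pos h]
      exact golomb_insert_s5 (hB3 _) (hB2 _) (by omega)
    · simp only [dif_neg h]
      exact golomb_shift nB (hA2 _)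
  · intro i
    by_cases h : (i : ℕ) < a - 1
    · simp only [dif_pos h]
      intro w hw
      rcases Finset.mem_insert.1 hw with rfl | hw
      · simp only [Finset.mem_Icc]; omega
      · have := hBel _ _ hw; simp only [Finset.mem_Icc]; omega
    · simp only [dif_neg h]
      intro w hw
      simp only [Finset.mem_image] at hw
      obtain ⟨w', hw', rfl⟩ := hw
      have := hAel _ _ hw'
      simp only [Finset.mem_Icc]; omega
  · intro i j hij
    have hv : (i : ℕ) ≠ (j : ℕ) := fun hh => hij (Fin.ext hh)
    by_cases hi : (i : ℕ) < a - 1 <;> by_cases hj : (j : ℕ) < a - 1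
    · simp only [dif_pos hi, dif_pos hj]
      rw [Finset.disjoint_left]
      intro w hw hw'
      rcases Finset.mem_insert.1 hw with rfl | hw
      · rcases Finset.mem_insert.1 hw' with he | hw'
        · omega
        · have := hBel _ _ hw'; omega
      · rcases Finset.mem_insert.1 hw' with he | hw'
        · have := hBel _ _ hw; omega
        · exact Finset.disjoint_left.1 (hB4 ⟨i, hi⟩ ⟨j, hj⟩ (by simpa [Fin.ext_iff] using hv)) hw hw'
    · simp only [dif_pos hi, dif_neg hj]
      rw [Finset.disjoint_left]
      intro w hw hw'
      simp only [Finset.mem_image] at hw'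
      obtain ⟨w', hw', rfl⟩ := hw'
      have h2 := hAel _ _ hw'
      rcases Finset.mem_insert.1 hw with he | hw
      · omega
      · have := hBel _ _ hw; omega
    · simp only [dif_neg hi, dif_pos hj]
      rw [Finset.disjoint_left]
      intro w hw hw'
      simp only [Finset.mem_image] at hw
      obtain ⟨w0, hw0, rfl⟩ := hw
      have h2 := hAel _ _ hw0
      rcases Finset.mem_insert.1 hw' with he | hw'
      · omega
      · have := hBel _ _ hw'; omega
    · simp only [dif_neg hi, dif_neg hj]
      rw [Finset.disjoint_left]
      intro w hw hw'
      simp only [Finset.mem_image] at hw hw'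
      obtain ⟨w1, hw1, rfl⟩ := hw
      obtain ⟨w2, hw2, he2⟩ := hw'
      have hw12 : w2 = w1 := by omega
      subst hw12
      have hne : (⟨(i : ℕ) - (a - 1), by have := i.isLt; omega⟩ : Fin a) ≠
          ⟨(j : ℕ) - (a - 1), by have := j.isLt; omega⟩ := by
        simp only [ne_eq, Fin.mk.injEq]
        omega
      exact Finset.disjoint_left.1 (hA4 _ _ hne) hw1 hw2

theorem H_two_a_sub_one (a J : ℕ) (ha : 0 < a) (hJ : 3 ≤ J) :
    H (2 * a - 1) J ≤ H a J + H (a - 1) (J - 1) + a - 1 := by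
  by_cases hSA : {n | 0 < n ∧ ∃ F : Fin a → Finset ℕ, IsDGR a J n F}.Nonempty
  · unfold H
    have hAmem := Nat.sInf_mem hSA
    set nA := sInf {n | 0 < n ∧ ∃ F : Fin a → Finset ℕ, IsDGR a J n F} with hnAdef
    obtain ⟨hnApos, FA, hFA⟩ := hAmem
    have hAinB : nA ∈ {n | 0 < n ∧ ∃ F : Fin (a - 1) → Finset ℕ, IsDGR (a - 1) (J - 1) n F} :=
      ⟨hnApos, dgr_mono_J (by omega) (dgr_mono_I (Nat.sub_le a 1) hFA)⟩
    have hSB : ({n | 0 < n ∧ ∃ F : Fin (a - 1) → Finset ℕ,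
        IsDGR (a - 1) (J - 1) n F}).Nonempty := ⟨nA, hAinB⟩
    have hBmem := Nat.sInf_mem hSB
    set nB := sInf {n | 0 < n ∧ ∃ F : Fin (a - 1) → Finset ℕ, IsDGR (a - 1) (J - 1) n F}
      with hnBdef
    obtain ⟨hnBpos, FB, hFB⟩ := hBmem
    have hle : nB ≤ nA := Nat.sInf_le hAinB
    obtain ⟨F, hF⟩ := combine (by omega) hle (by omega) hFA hFB
    have hmem2 : (nA + nB + (a - 1)) ∈
        {n | 0 < n ∧ ∃ F : Fin (2 * a - 1) → Finset ℕ, IsDGR (2 * a - 1) J n F} :=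
      ⟨by omega, F, hF⟩
    have hfin := Nat.sInf_le hmem2
    omega
  · have h2 : {n | 0 < n ∧ ∃ F : Fin (2 * a - 1) → Finset ℕ, IsDGR (2 * a - 1) J n F} = ∅ := by
      rw [Set.eq_empty_iff_forall_notMem]
      rintro n ⟨hn, F, hF⟩
      exact hSA ⟨n, hn, _, dgr_mono_I (by omega : a ≤ 2 * a - 1) hF⟩
    unfold H
    rw [h2, Nat.sInf_empty]
    exact Nat.zero_le _
end

section
/- Let J ≥ 3, a ≥ 1, n = H(a,J) ≥ aJ+1, and let {A_1,...,A_a} be an (a,J)-DGR contained in {1,...,n}. If the complement of A_1 ∪ ... ∪ A_a within {1,...,n} contains a gap of w consecutive integers {t+1,...,t+w}, then w < H(1,J). -/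
theorem gap_lt_H_one (a J n t w : ℕ) (ha : 1 ≤ a) (hJ : 3 ≤ J)
    (hn : n = H a J) (hn' : a * J + 1 ≤ n)
    (F : Fin a → Finset ℕ) (hF : IsDGR a J n F)
    (hw : 0 < w)
    (hsub : Finset.Icc (t + 1) (t + w) ⊆ Finset.Icc 1 n)
    (hdisj : ∀ i, Disjoint (Finset.Icc (t + 1) (t + w)) (F i)) :
    w < H 1 J := by
  by_contra hcon
  push_neg at hcon
  obtain ⟨hFcard, hFgol, hFsub, hFdisj⟩ := hF
  have haJ : 3 ≤ a * J := le_trans hJ (Nat.le_mul_of_pos_left J ha)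
  have hnpos : 0 < n := by omega
  -- n is in the defining set for H 1 J
  have hmem : n ∈ {m | 0 < m ∧ ∃ G : Fin 1 → Finset ℕ, IsDGR 1 J m G} := by
    refine ⟨hnpos, fun _ => F ⟨0, ha⟩, fun i => hFcard _, fun i => hFgol _,
      fun i => hFsub _, fun i j hij => absurd (Subsingleton.elim i j) hij⟩
  have hH1mem : H 1 J ∈ {m | 0 < m ∧ ∃ G : Fin 1 → Finset ℕ, IsDGR 1 J m G} :=
    Nat.sInf_mem ⟨n, hmem⟩
  obtain ⟨hH1pos, G, hGcard, hGgol, hGsub, -⟩ := hH1mem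
  -- translate the ruler G 0 into the gap
  set B : Finset ℕ := (G 0).image (· + t) with hB
  have hBcard : B.card = J := by
    rw [hB, Finset.card_image_of_injective _ (add_left_injective t)]; exact hGcard 0
  have hBgap : B ⊆ Finset.Icc (t + 1) (t + w) := by
    intro x hx
    obtain ⟨y, hy, rfl⟩ := Finset.mem_image.mp hx
    have := hGsub 0 hy
    simp only [Finset.mem_Icc] at this ⊢
    omega
  have hBgol : IsGolomb B := by
    intro p hp q hq r hr s hs hpq hrs heq
    obtain ⟨p', hp', rfl⟩ := Finset.mem_image.mp hp
    obtain ⟨q', hq', rfl⟩ := Finset.mem_image.mp hq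
    obtain ⟨r', hr', rfl⟩ := Finset.mem_image.mp hr
    obtain ⟨s', hs', rfl⟩ := Finset.mem_image.mp hs
    have h1 : p' ≠ q' := by intro h; exact hpq (by rw [h])
    have h2 : r' ≠ s' := by intro h; exact hrs (by rw [h])
    have h3 : (p' : ℤ) - q' = (r' : ℤ) - s' := by push_cast at heq ⊢; linarith
    obtain ⟨e1, e2⟩ := hGgol 0 p' hp' q' hq' r' hr' s' hs' h1 h2 h3
    exact ⟨by rw [e1], by rw [e2]⟩
  have hBdisj : ∀ i, Disjoint B (F i) := fun i =>
    ((hdisj i).mono_left hBgap)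
  -- replace the ruler containing n (if any) by B
  set F' : Fin a → Finset ℕ := fun i => if n ∈ F i then B else F i with hF'
  have hF'sub : ∀ i, F' i ⊆ Finset.Icc 1 (n - 1) := by
    intro i x hx
    rw [hF'] at hx; dsimp only at hx
    split_ifs at hx with hni
    · have hxn : x ∈ Finset.Icc 1 n := hsub (hBgap hx)
      have : x ≠ n := by
        intro h; subst h
        exact Finset.disjoint_left.mp (hBdisj i) hx hni
      simp only [Finset.mem_Icc] at hxn ⊢; omega
    · have hxn := hFsub i hx
      have : x ≠ n := by intro h; subst h; exact hni hx
      simp only [Finset.mem_Icc] at hxn ⊢; omega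
  have hDGR' : IsDGR a J (n - 1) F' := by
    refine ⟨fun i => ?_, fun i => ?_, hF'sub, fun i j hij => ?_⟩
    · rw [hF']; dsimp only; split_ifs with h
      · exact hBcard
      · exact hFcard i
    · rw [hF']; dsimp only; split_ifs with h
      · exact hBgol
      · exact hFgol i
    · rw [hF']; dsimp only; split_ifs with h1 h2 h3
      · exact absurd (Finset.disjoint_left.mp (hFdisj i j hij) h1 h2) (by simp)
      · exact hBdisj j
      · exact (hBdisj i).symm
      · exact hFdisj i j hij
  have hle : H a J ≤ n - 1 := Nat.sInf_le ⟨by omega, F', hDGR'⟩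
  omega
end

section
/- Let J ≥ 3 and a, b ≥ 1 with H(a,J) ≥ aJ+1. If there exists an (a,J)-DGR {A_1,...,A_a} in {1,...,H(a,J)} whose union omits w consecutive integers, then H(a+b, J) ≤ H(a,J) + H(b,J) − w. -/
namespace HAddGap

def splice (T c₁ c₂ x : ℕ) : ℕ := if x ≤ T then x + c₁ else x + c₂

lemma splice_injective {T c₁ c₂ : ℕ} (hc : c₁ ≤ c₂) :
    Function.Injective (splice T c₁ c₂) := by
  intro p q h
  unfold splice at h
  split_ifs at h <;> omega

lemma splice_const (T c x : ℕ) : splice T c c x = x + c := by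
  unfold splice; split <;> rfl

lemma mem_image_splice {A : Finset ℕ} {T c₁ c₂ z : ℕ}
    (hz : z ∈ A.image (splice T c₁ c₂)) :
    ∃ x ∈ A, (x ≤ T ∧ z = x + c₁) ∨ (T < x ∧ z = x + c₂) := by
  obtain ⟨x, hx, rfl⟩ := Finset.mem_image.mp hz
  refine ⟨x, hx, ?_⟩
  unfold splice
  split_ifs with h
  · exact Or.inl ⟨h, rfl⟩
  · exact Or.inr ⟨by omega, rfl⟩

lemma disjoint_image_of {A B : Finset ℕ} {f : ℕ → ℕ} (hf : Function.Injective f)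
    (h : Disjoint A B) : Disjoint (A.image f) (B.image f) := by
  rw [Finset.disjoint_left]
  rintro z hz1 hz2
  obtain ⟨x, hx, rfl⟩ := Finset.mem_image.mp hz1
  obtain ⟨y, hy, hyx⟩ := Finset.mem_image.mp hz2
  exact Finset.disjoint_left.mp h hx (hf hyx ▸ hy)

lemma isGolomb_image_splice {A : Finset ℕ} {T g c₁ c₂ : ℕ}
    (hA : IsGolomb A) (hc : c₁ ≤ c₂)
    (hgap : ∀ x ∈ A, x ≤ T ∨ T + g < x)
    (hbound : c₁ = c₂ ∨
      ((∀ x ∈ A, ∀ y ∈ A, x ≤ T → y ≤ T → (x : ℤ) - y ≤ ((c₂ - c₁ : ℕ) : ℤ) + (g : ℤ)) ∧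
       (∀ x ∈ A, ∀ y ∈ A, T < x → T < y → (x : ℤ) - y ≤ ((c₂ - c₁ : ℕ) : ℤ) + (g : ℤ)))) :
    IsGolomb (A.image (splice T c₁ c₂)) := by
  intro a' ha' b' hb' c' hc' d' hd' hne1 hne2 heq
  obtain ⟨x, hx, rfl⟩ := Finset.mem_image.mp ha'
  obtain ⟨y, hy, rfl⟩ := Finset.mem_image.mp hb'
  obtain ⟨u, hu, rfl⟩ := Finset.mem_image.mp hc'
  obtain ⟨v, hv, rfl⟩ := Finset.mem_image.mp hd'
  have hxy : x ≠ y := fun h => hne1 (by rw [h])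
  have huv : u ≠ v := fun h => hne2 (by rw [h])
  have key : (x : ℤ) - y = (u : ℤ) - v := by
    rcases hbound with rfl | ⟨hlo, hhi⟩
    · simp only [splice_const] at heq
      omega
    · have fv : ∀ z ∈ A, (z ≤ T ∧ splice T c₁ c₂ z = z + c₁) ∨
          (T + g < z ∧ splice T c₁ c₂ z = z + c₂) := by
        intro z hz
        rcases hgap z hz with h | h
        · exact Or.inl ⟨h, if_pos h⟩
        · exact Or.inr ⟨h, if_neg (by omega)⟩
      rcases fv x hx with ⟨hx1, hx2⟩ | ⟨hx1, hx2⟩ <;>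
      rcases fv y hy with ⟨hy1, hy2⟩ | ⟨hy1, hy2⟩ <;>
      rcases fv u hu with ⟨hu1, hu2⟩ | ⟨hu1, hu2⟩ <;>
      rcases fv v hv with ⟨hv1, hv2⟩ | ⟨hv1, hv2⟩ <;>
      rw [hx2, hy2, hu2, hv2] at heq
      all_goals try have B1 := hlo x hx y hy hx1 hy1
      all_goals try have B2 := hlo y hy x hx hy1 hx1
      all_goals try have B3 := hlo u hu v hv hu1 hv1
      all_goals try have B4 := hlo v hv u hu hv1 hu1
      all_goals try have B5 := hhi x hx y hy (by omega) (by omega)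
      all_goals try have B6 := hhi y hy x hx (by omega) (by omega)
      all_goals try have B7 := hhi u hu v hv (by omega) (by omega)
      all_goals try have B8 := hhi v hv u hu (by omega) (by omega)
      all_goals omega
  obtain ⟨h1, h2⟩ := hA x hx y hy u hu v hv hxy huv key
  exact ⟨by rw [h1], by rw [h2]⟩

lemma isGolomb_reflect {A : Finset ℕ} {n : ℕ} (hA : IsGolomb A)
    (hsub : ∀ x ∈ A, 1 ≤ x ∧ x ≤ n) :
    IsGolomb (A.image (fun x => n + 1 - x)) := by
  intro a' ha' b' hb' c' hc' d' hd' hne1 hne2 heq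
  obtain ⟨x, hx, rfl⟩ := Finset.mem_image.mp ha'
  obtain ⟨y, hy, rfl⟩ := Finset.mem_image.mp hb'
  obtain ⟨u, hu, rfl⟩ := Finset.mem_image.mp hc'
  obtain ⟨v, hv, rfl⟩ := Finset.mem_image.mp hd'
  have hxn := hsub x hx
  have hyn := hsub y hy
  have hun := hsub u hu
  have hvn := hsub v hv
  have hxy : y ≠ x := fun h => hne1 (by rw [h])
  have huv : v ≠ u := fun h => hne2 (by rw [h])
  have key : (y : ℤ) - x = (v : ℤ) - u := by omega
  obtain ⟨h1, h2⟩ := hA y hy x hx v hv u hu hxy huv key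
  exact ⟨by rw [h2], by rw [h1]⟩

lemma exists_DGR_add {a b J N : ℕ} {K1 : Fin a → Finset ℕ} {K2 : Fin b → Finset ℕ}
    (h1 : IsDGR a J N K1) (h2 : IsDGR b J N K2)
    (hcross : ∀ i j, Disjoint (K1 i) (K2 j)) :
    ∃ K, IsDGR (a + b) J N K := by
  obtain ⟨h1c, h1g, h1s, h1d⟩ := h1
  obtain ⟨h2c, h2g, h2s, h2d⟩ := h2
  refine ⟨fun i => if h : (i : ℕ) < a then K1 ⟨i, h⟩
      else K2 ⟨(i : ℕ) - a, by have := i.isLt; omega⟩, ?_, ?_, ?_, ?_⟩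
  · intro i
    by_cases h : (i : ℕ) < a
    · beta_reduce
      rw [dif_pos h]; exact h1c _
    · beta_reduce
      rw [dif_neg h]; exact h2c _
  · intro i
    by_cases h : (i : ℕ) < a
    · beta_reduce
      rw [dif_pos h]; exact h1g _
    · beta_reduce
      rw [dif_neg h]; exact h2g _
  · intro i
    by_cases h : (i : ℕ) < a
    · beta_reduce
      rw [dif_pos h]; exact h1s _
    · beta_reduce
      rw [dif_neg h]; exact h2s _
  · intro i j hij
    have hv : (i : ℕ) ≠ (j : ℕ) := fun h => hij (Fin.val_injective h)
    by_cases hi : (i : ℕ) < a <;> by_cases hj : (j : ℕ) < a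
    · beta_reduce
      rw [dif_pos hi, dif_pos hj]
      exact h1d _ _ (fun h => hv (by simpa using congrArg Fin.val h))
    · beta_reduce
      rw [dif_pos hi, dif_neg hj]; exact hcross _ _
    · beta_reduce
      rw [dif_neg hi, dif_pos hj]; exact (hcross _ _).symm
    · beta_reduce
      rw [dif_neg hi, dif_neg hj]
      refine h2d _ _ (fun h => ?_)
      have := congrArg Fin.val h
      simp at this
      omega

-- case w = 0 : plain concatenation
lemma caseC0 {a b J n m : ℕ} {F : Fin a → Finset ℕ} {G : Fin b → Finset ℕ}
    (hF : IsDGR a J n F) (hG : IsDGR b J m G) :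
    ∃ K, IsDGR (a + b) J (n + m) K := by
  obtain ⟨hFc, hFg, hFs, hFd⟩ := hF
  obtain ⟨hGc, hGg, hGs, hGd⟩ := hG
  have gmem : ∀ j, ∀ x ∈ G j, 1 ≤ x ∧ x ≤ m := fun j x hx => Finset.mem_Icc.mp (hGs j hx)
  have ginj : Function.Injective (splice 0 n n) := splice_injective le_rfl
  have hK2 : IsDGR b J (n + m) (fun j => (G j).image (splice 0 n n)) := by
    refine ⟨?_, ?_, ?_, ?_⟩
    · intro j; rw [Finset.card_image_of_injective _ ginj]; exact hGc j
    · intro j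
      exact isGolomb_image_splice (g := 0) (hGg j) le_rfl (fun x _ => by omega) (Or.inl rfl)
    · intro j z hz
      obtain ⟨x, hx, hc⟩ := mem_image_splice hz
      have := gmem j x hx
      rw [Finset.mem_Icc]
      rcases hc with ⟨h1, h2⟩ | ⟨h1, h2⟩ <;> omega
    · intro i j hij
      exact disjoint_image_of ginj (hGd i j hij)
  refine exists_DGR_add ⟨hFc, hFg, fun i => (hFs i).trans (Finset.Icc_subset_Icc le_rfl (by omega)), hFd⟩ hK2 ?_
  intro i j
  rw [Finset.disjoint_left]
  intro z hz1 hz2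
  have h1 := Finset.mem_Icc.mp (hFs i hz1)
  obtain ⟨x, hx, hc⟩ := mem_image_splice hz2
  have := gmem j x hx
  rcases hc with ⟨ha1, ha2⟩ | ⟨ha1, ha2⟩ <;> omega

-- case C1 : splice the top of F up by m - w, translate G into the widened gap
lemma caseC1 {a b J n m w t : ℕ} {F : Fin a → Finset ℕ} {G : Fin b → Finset ℕ}
    (hF : IsDGR a J n F) (hG : IsDGR b J m G)
    (hgapF : ∀ i, ∀ x ∈ F i, x ≤ t ∨ t + w < x)
    (htn : t + w ≤ n) (hwm : w ≤ m)
    (hT : t ≤ m + 1) (hQ : n ≤ t + w + m + 1) :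
    ∃ K, IsDGR (a + b) J (n + m - w) K := by
  obtain ⟨hFc, hFg, hFs, hFd⟩ := hF
  obtain ⟨hGc, hGg, hGs, hGd⟩ := hG
  have fmem : ∀ i, ∀ x ∈ F i, 1 ≤ x ∧ x ≤ n := fun i x hx => Finset.mem_Icc.mp (hFs i hx)
  have gmem : ∀ j, ∀ x ∈ G j, 1 ≤ x ∧ x ≤ m := fun j x hx => Finset.mem_Icc.mp (hGs j hx)
  have finj : Function.Injective (splice t 0 (m - w)) := splice_injective (by omega)
  have ginj : Function.Injective (splice 0 t t) := splice_injective le_rfl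
  have hK1 : IsDGR a J (n + m - w) (fun i => (F i).image (splice t 0 (m - w))) := by
    refine ⟨?_, ?_, ?_, ?_⟩
    · intro i; rw [Finset.card_image_of_injective _ finj]; exact hFc i
    · intro i
      refine isGolomb_image_splice (g := w) (hFg i) (by omega) (hgapF i) (Or.inr ⟨?_, ?_⟩)
      · intro x hx y hy hx1 hy1
        have h1 := fmem i x hx; have h2 := fmem i y hy
        omega
      · intro x hx y hy hx1 hy1
        have h1 := fmem i x hx; have h2 := fmem i y hy
        rcases hgapF i x hx with h | h <;> rcases hgapF i y hy with h' | h' <;> omega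
    · intro i z hz
      obtain ⟨x, hx, hc⟩ := mem_image_splice hz
      have := fmem i x hx
      rw [Finset.mem_Icc]
      rcases hc with ⟨h1, h2⟩ | ⟨h1, h2⟩ <;> omega
    · intro i j hij
      exact disjoint_image_of finj (hFd i j hij)
  have hK2 : IsDGR b J (n + m - w) (fun j => (G j).image (splice 0 t t)) := by
    refine ⟨?_, ?_, ?_, ?_⟩
    · intro j; rw [Finset.card_image_of_injective _ ginj]; exact hGc j
    · intro j
      exact isGolomb_image_splice (g := 0) (hGg j) le_rfl (fun x _ => by omega) (Or.inl rfl)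
    · intro j z hz
      obtain ⟨x, hx, hc⟩ := mem_image_splice hz
      have := gmem j x hx
      rw [Finset.mem_Icc]
      rcases hc with ⟨h1, h2⟩ | ⟨h1, h2⟩ <;> omega
    · intro i j hij
      exact disjoint_image_of ginj (hGd i j hij)
  refine exists_DGR_add hK1 hK2 ?_
  intro i j
  rw [Finset.disjoint_left]
  intro z hz1 hz2
  obtain ⟨x, hx, hc⟩ := mem_image_splice hz1
  obtain ⟨y, hy, hc'⟩ := mem_image_splice hz2
  have h1 := fmem i x hx
  have h2 := gmem j y hy
  have h3 := hgapF i x hx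
  rcases hc with ⟨e1, e2⟩ | ⟨e1, e2⟩ <;> rcases hc' with ⟨e3, e4⟩ | ⟨e3, e4⟩ <;>
    rcases h3 with h3 | h3 <;> omega

-- case C2 : keep F, splice G into gap and top
lemma caseC2 {a b J n m w t : ℕ} {F : Fin a → Finset ℕ} {G : Fin b → Finset ℕ}
    (hF : IsDGR a J n F) (hG : IsDGR b J m G)
    (hgapF : ∀ i, ∀ x ∈ F i, x ≤ t ∨ t + w < x)
    (htn : t + w ≤ n) (hwm : w ≤ m)
    (hQ : t + w + m ≤ n) :
    ∃ K, IsDGR (a + b) J (n + m - w) K := by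
  obtain ⟨hFc, hFg, hFs, hFd⟩ := hF
  obtain ⟨hGc, hGg, hGs, hGd⟩ := hG
  have fmem : ∀ i, ∀ x ∈ F i, 1 ≤ x ∧ x ≤ n := fun i x hx => Finset.mem_Icc.mp (hFs i hx)
  have gmem : ∀ j, ∀ x ∈ G j, 1 ≤ x ∧ x ≤ m := fun j x hx => Finset.mem_Icc.mp (hGs j hx)
  have ginj : Function.Injective (splice w t (n - w)) := splice_injective (by omega)
  have hK2 : IsDGR b J (n + m - w) (fun j => (G j).image (splice w t (n - w))) := by
    refine ⟨?_, ?_, ?_, ?_⟩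
    · intro j; rw [Finset.card_image_of_injective _ ginj]; exact hGc j
    · intro j
      refine isGolomb_image_splice (g := 0) (hGg j) (by omega) (fun x _ => by omega)
        (Or.inr ⟨?_, ?_⟩)
      · intro x hx y hy hx1 hy1
        have h1 := gmem j x hx; have h2 := gmem j y hy
        omega
      · intro x hx y hy hx1 hy1
        have h1 := gmem j x hx; have h2 := gmem j y hy
        omega
    · intro j z hz
      obtain ⟨x, hx, hc⟩ := mem_image_splice hz
      have := gmem j x hx
      rw [Finset.mem_Icc]
      rcases hc with ⟨h1, h2⟩ | ⟨h1, h2⟩ <;> omega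
    · intro i j hij
      exact disjoint_image_of ginj (hGd i j hij)
  refine exists_DGR_add ⟨hFc, hFg, fun i => (hFs i).trans (Finset.Icc_subset_Icc le_rfl (by omega)), hFd⟩ hK2 ?_
  intro i j
  rw [Finset.disjoint_left]
  intro z hz1 hz2
  have h1 := fmem i z hz1
  have h3 := hgapF i z hz1
  obtain ⟨y, hy, hc'⟩ := mem_image_splice hz2
  have h2 := gmem j y hy
  rcases hc' with ⟨e3, e4⟩ | ⟨e3, e4⟩ <;> rcases h3 with h3 | h3 <;> omega

-- reflection
lemma reflectDGR {a J n w t : ℕ} {F : Fin a → Finset ℕ}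
    (hF : IsDGR a J n F)
    (hgapF : ∀ i, ∀ x ∈ F i, x ≤ t ∨ t + w < x)
    (htn : t + w ≤ n) :
    IsDGR a J n (fun i => (F i).image (fun x => n + 1 - x)) ∧
    (∀ i, ∀ z ∈ (F i).image (fun x => n + 1 - x), z ≤ n - t - w ∨ (n - t - w) + w < z) := by
  obtain ⟨hFc, hFg, hFs, hFd⟩ := hF
  have fmem : ∀ i, ∀ x ∈ F i, 1 ≤ x ∧ x ≤ n := fun i x hx => Finset.mem_Icc.mp (hFs i hx)
  refine ⟨⟨?_, ?_, ?_, ?_⟩, ?_⟩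
  · intro i
    rw [Finset.card_image_of_injOn]
    · exact hFc i
    · intro x hx y hy hxy
      have := fmem i x hx; have := fmem i y hy
      simp only at hxy
      omega
  · intro i
    exact isGolomb_reflect (hFg i) (fmem i)
  · intro i z hz
    obtain ⟨x, hx, rfl⟩ := Finset.mem_image.mp hz
    have := fmem i x hx
    rw [Finset.mem_Icc]
    omega
  · intro i j hij
    rw [Finset.disjoint_left]
    intro z hz1 hz2
    obtain ⟨x, hx, rfl⟩ := Finset.mem_image.mp hz1
    obtain ⟨y, hy, hyx⟩ := Finset.mem_image.mp hz2
    have := fmem i x hx; have := fmem j y hy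
    have : y = x := by omega
    exact Finset.disjoint_left.mp (hFd i j hij) hx (this ▸ hy)
  · intro i z hz
    obtain ⟨x, hx, rfl⟩ := Finset.mem_image.mp hz
    have := fmem i x hx
    rcases hgapF i x hx with h | h <;> omega

-- every set of n positive integers: translates give a (c,J)-DGR, so the H-set is nonempty
lemma Sb_nonempty {J n c : ℕ} {A : Finset ℕ} (hA : IsGolomb A) (hcard : A.card = J)
    (hsub : A ⊆ Finset.Icc 1 n) (hn : 0 < n) (hc : 1 ≤ c) :
    {ν : ℕ | 0 < ν ∧ ∃ F : Fin c → Finset ℕ, IsDGR c J ν F}.Nonempty := by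
  have amem : ∀ x ∈ A, 1 ≤ x ∧ x ≤ n := fun x hx => Finset.mem_Icc.mp (hsub hx)
  refine ⟨c * n, Nat.mul_pos hc hn, fun i => A.image (splice 0 ((i : ℕ) * n) ((i : ℕ) * n)),
    ?_, ?_, ?_, ?_⟩
  · intro i
    rw [Finset.card_image_of_injective _ (splice_injective le_rfl)]
    exact hcard
  · intro i
    exact isGolomb_image_splice (g := 0) hA le_rfl (fun x _ => by omega) (Or.inl rfl)
  · intro i z hz
    obtain ⟨x, hx, hcs⟩ := mem_image_splice hz
    have h1 := amem x hx
    have h2 : ((i : ℕ) + 1) * n ≤ c * n := Nat.mul_le_mul_right n (by have := i.isLt; omega)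
    rw [add_one_mul] at h2
    rw [Finset.mem_Icc]
    rcases hcs with ⟨e1, e2⟩ | ⟨e1, e2⟩ <;> omega
  · intro i j hij
    have hv : (i : ℕ) ≠ (j : ℕ) := fun h => hij (Fin.val_injective h)
    rw [Finset.disjoint_left]
    intro z hz1 hz2
    obtain ⟨x, hx, hcs⟩ := mem_image_splice hz1
    obtain ⟨y, hy, hcs'⟩ := mem_image_splice hz2
    have h1 := amem x hx
    have h2 := amem y hy
    rcases Nat.lt_or_ge (i : ℕ) (j : ℕ) with hlt | hge
    · have h3 : ((i : ℕ) + 1) * n ≤ (j : ℕ) * n := Nat.mul_le_mul_right n (by omega)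
      rw [add_one_mul] at h3
      rcases hcs with ⟨e1, e2⟩ | ⟨e1, e2⟩ <;> rcases hcs' with ⟨e3, e4⟩ | ⟨e3, e4⟩ <;> omega
    · have hlt' : (j : ℕ) < (i : ℕ) := by omega
      have h3 : ((j : ℕ) + 1) * n ≤ (i : ℕ) * n := Nat.mul_le_mul_right n (by omega)
      rw [add_one_mul] at h3
      rcases hcs with ⟨e1, e2⟩ | ⟨e1, e2⟩ <;> rcases hcs' with ⟨e3, e4⟩ | ⟨e3, e4⟩ <;> omega

-- the gap in an optimal DGR is at most H b J (given some (b,J)-DGR at m exists)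
lemma gap_le {a J n w t m b : ℕ} {F : Fin a → Finset ℕ} {G : Fin b → Finset ℕ}
    (hF : IsDGR a J n F) (hG : IsDGR b J m G) (hb : 1 ≤ b)
    (hgapF : ∀ i, ∀ x ∈ F i, x ≤ t ∨ t + w < x)
    (htn : t + w ≤ n) (hn2 : 2 ≤ n)
    (hmin : ∀ k, 0 < k → (∃ F' : Fin a → Finset ℕ, IsDGR a J k F') → n ≤ k) :
    w ≤ m := by
  by_contra hcon
  push_neg at hcon
  obtain ⟨hFc, hFg, hFs, hFd⟩ := hF
  obtain ⟨hGc, hGg, hGs, hGd⟩ := hG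
  have fmem : ∀ i, ∀ x ∈ F i, 1 ≤ x ∧ x ≤ n := fun i x hx => Finset.mem_Icc.mp (hFs i hx)
  set R : Finset ℕ := (G ⟨0, hb⟩).image (splice 0 t t) with hR
  have gmem : ∀ x ∈ G ⟨0, hb⟩, 1 ≤ x ∧ x ≤ m :=
    fun x hx => Finset.mem_Icc.mp (hGs _ hx)
  have hRmem : ∀ z ∈ R, t + 1 ≤ z ∧ z ≤ t + m := by
    intro z hz
    obtain ⟨x, hx, hcs⟩ := mem_image_splice hz
    have := gmem x hx
    rcases hcs with ⟨e1, e2⟩ | ⟨e1, e2⟩ <;> omega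
  by_cases hex : ∃ i, n ∈ F i
  · obtain ⟨i₀, hi₀⟩ := hex
    have key : ∃ F' : Fin a → Finset ℕ, IsDGR a J (n - 1) F' := by
      refine ⟨fun i => if i = i₀ then R else F i, ?_, ?_, ?_, ?_⟩
      · intro i
        by_cases h : i = i₀
        · beta_reduce
          rw [if_pos h, hR, Finset.card_image_of_injective _ (splice_injective le_rfl)]
          exact hGc _
        · beta_reduce
          rw [if_neg h]; exact hFc i
      · intro i
        by_cases h : i = i₀
        · beta_reduce
          rw [if_pos h]
          exact isGolomb_image_splice (g := 0) (hGg _) le_rfl (fun x _ => by omega) (Or.inl rfl)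
        · beta_reduce
          rw [if_neg h]; exact hFg i
      · intro i z hz
        rw [Finset.mem_Icc]
        beta_reduce at hz
        by_cases h : i = i₀
        · rw [if_pos h] at hz
          have := hRmem z hz
          omega
        · rw [if_neg h] at hz
          have h1 := fmem i z hz
          have h2 : z ≠ n := by
            intro rfl'
            exact Finset.disjoint_left.mp (hFd i i₀ h) hz (rfl' ▸ hi₀)
          omega
      · intro i j hij
        beta_reduce
        by_cases h : i = i₀ <;> by_cases h' : j = i₀
        · exact absurd (h.trans h'.symm) hij
        · rw [if_pos h, if_neg h']
          rw [Finset.disjoint_left]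
          intro z hz1 hz2
          have h1 := hRmem z hz1
          rcases hgapF j z hz2 with hh | hh <;> omega
        · rw [if_neg h, if_pos h']
          rw [Finset.disjoint_left]
          intro z hz1 hz2
          have h1 := hRmem z hz2
          rcases hgapF i z hz1 with hh | hh <;> omega
        · rw [if_neg h, if_neg h']; exact hFd i j hij
    have := hmin (n - 1) (by omega) key
    omega
  · push_neg at hex
    have key : ∃ F' : Fin a → Finset ℕ, IsDGR a J (n - 1) F' := by
      refine ⟨F, hFc, hFg, ?_, hFd⟩
      intro i z hz
      have h1 := fmem i z hz
      have h2 : z ≠ n := fun h => hex i (h ▸ hz)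
      rw [Finset.mem_Icc]; omega
    have := hmin (n - 1) (by omega) key
    omega

end HAddGap

open HAddGap in
theorem H_add_of_gap (a b J w : ℕ) (ha : 1 ≤ a) (hb : 1 ≤ b) (hJ : 3 ≤ J)
    (hn' : a * J + 1 ≤ H a J)
    (hgap : ∃ (F : Fin a → Finset ℕ) (t : ℕ), IsDGR a J (H a J) F ∧
      Finset.Icc (t + 1) (t + w) ⊆ Finset.Icc 1 (H a J) ∧
      ∀ i, Disjoint (Finset.Icc (t + 1) (t + w)) (F i)) :
    H (a + b) J ≤ H a J + H b J - w := by
  obtain ⟨F, t, hF, hsub, hdisj⟩ := hgap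
  have haJ : 3 ≤ a * J := le_trans hJ (by calc J = 1 * J := (one_mul J).symm
                                            _ ≤ a * J := Nat.mul_le_mul_right J ha)
  set n := H a J with hn
  set m := H b J with hm
  have hn4 : 4 ≤ n := by omega
  -- minimality of n
  have hmin : ∀ k, 0 < k → (∃ F' : Fin a → Finset ℕ, IsDGR a J k F') → n ≤ k := by
    intro k hk ⟨F', hF'⟩
    have : H a J ≤ k := Nat.sInf_le ⟨hk, F', hF'⟩
    omega
  -- existence of a (b,J)-DGR at m
  have hSb : {ν : ℕ | 0 < ν ∧ ∃ G : Fin b → Finset ℕ, IsDGR b J ν G}.Nonempty :=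
    Sb_nonempty (hF.2.1 ⟨0, ha⟩) (hF.1 ⟨0, ha⟩) (hF.2.2.1 ⟨0, ha⟩) (by omega) hb
  have hmmem : 0 < H b J ∧ ∃ G : Fin b → Finset ℕ, IsDGR b J (H b J) G := Nat.sInf_mem hSb
  obtain ⟨hmpos, G, hG⟩ := hmmem
  -- per-element gap description
  have hgapE : ∀ i, ∀ x ∈ F i, x ≤ t ∨ t + w < x := by
    intro i x hx
    by_contra hcon
    push_neg at hcon
    exact Finset.disjoint_left.mp (hdisj i) (Finset.mem_Icc.mpr ⟨by omega, by omega⟩) hx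
  rcases Nat.eq_zero_or_pos w with rfl | hw
  · obtain ⟨K, hK⟩ := caseC0 hF hG
    have : H (a + b) J ≤ n + m := Nat.sInf_le ⟨by omega, K, hK⟩
    omega
  · have htn : t + w ≤ n := by
      have := hsub (Finset.mem_Icc.mpr ⟨by omega, le_refl (t + w)⟩)
      exact (Finset.mem_Icc.mp this).2
    have hwm : w ≤ m := gap_le hF hG hb hgapE htn (by omega) hmin
    have key : ∃ K, IsDGR (a + b) J (n + m - w) K := by
      by_cases h2 : t + w + m ≤ n
      · exact caseC2 hF hG hgapE htn hwm h2
      · by_cases h3 : t ≤ m + 1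
        · exact caseC1 hF hG hgapE htn hwm h3 (by omega)
        · -- t ≥ m + 2 : reflect and use C2
          obtain ⟨hF', hgap'⟩ := reflectDGR hF hgapE htn
          have hgapE' : ∀ i, ∀ x ∈ (fun i => (F i).image (fun x => n + 1 - x)) i,
              x ≤ n - t - w ∨ (n - t - w) + w < x := hgap'
          exact caseC2 hF' hG hgapE' (by omega) hwm (by omega)
    obtain ⟨K, hK⟩ := key
    exact Nat.sInf_le ⟨by omega, K, hK⟩
end

section
/- Let J ≥ 3 and a ≥ 1 with H(a,J) ≥ aJ+1. If there exists an (a,J)-DGR in {1,...,H(a,J)} whose union omits w consecutive integers, then H(2a, J) ≤ 2·H(a,J) − 2w. -/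
/-- The doubling map used in the construction: the part of a ruler at
or below `t` is mapped by `x ↦ 2x - c`, the part above the gap by
`x ↦ 2x - (2w + 1 - c)`. -/
def psiA (t w c x : ℕ) : ℕ := if x ≤ t then 2*x - c else 2*x - (2*w + 1 - c)

lemma psiA_spec (t w c x : ℕ) (hc : c ≤ 1) (hx1 : 1 ≤ x)
    (hside : x ≤ t ∨ t + w + 1 ≤ x) :
    (x ≤ t ∧ psiA t w c x + c = 2*x) ∨
    (t + w + 1 ≤ x ∧ psiA t w c x + 2*w + 1 = 2*x + c) := by
  unfold psiA
  rcases hside with h | h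
  · rw [if_pos h]; exact Or.inl ⟨h, by omega⟩
  · rw [if_neg (by omega)]; exact Or.inr ⟨h, by omega⟩

theorem H_double_of_gap (a J w : ℕ) (ha : 1 ≤ a) (hJ : 3 ≤ J)
    (hn' : a * J + 1 ≤ H a J)
    (hgap : ∃ (F : Fin a → Finset ℕ) (t : ℕ), IsDGR a J (H a J) F ∧
      Finset.Icc (t + 1) (t + w) ⊆ Finset.Icc 1 (H a J) ∧
      ∀ i, Disjoint (Finset.Icc (t + 1) (t + w)) (F i)) :
    H (2 * a) J ≤ 2 * H a J - 2 * w := by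
  classical
  obtain ⟨F, t, hF, hsubI, hdisj⟩ := hgap
  set n := H a J with hn
  obtain ⟨hcard, hgol0, hsub0, hdis0⟩ := hF
  -- the gap fits below `n` (or is empty)
  have hwn : w = 0 ∨ t + w ≤ n := by
    rcases Nat.eq_zero_or_pos w with h | h
    · exact Or.inl h
    · right
      have h2 : t + w ∈ Finset.Icc (t+1) (t+w) := by
        rw [Finset.mem_Icc]; omega
      have h3 := hsubI h2
      rw [Finset.mem_Icc] at h3; omega
  -- every element of a ruler is in `[1,n]` and avoids the gap
  have hmem : ∀ i, ∀ x ∈ F i, 1 ≤ x ∧ x ≤ n ∧ (x ≤ t ∨ t + w + 1 ≤ x) := by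
    intro i x hx
    have h1 := hsub0 i hx
    rw [Finset.mem_Icc] at h1
    refine ⟨h1.1, h1.2, ?_⟩
    by_contra hcon
    push_neg at hcon
    have hxg : x ∈ Finset.Icc (t+1) (t+w) := by
      rw [Finset.mem_Icc]; omega
    exact (Finset.disjoint_left.mp (hdisj i) hxg) hx
  -- pointwise injectivity of `psiA t w c` on ruler elements
  have hinj : ∀ c, c ≤ 1 → ∀ x y : ℕ, 1 ≤ x → 1 ≤ y →
      (x ≤ t ∨ t + w + 1 ≤ x) → (y ≤ t ∨ t + w + 1 ≤ y) →
      psiA t w c x = psiA t w c y → x = y := by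
    intro c hc x y hx1 hy1 hxs hys hxy
    have h1 := psiA_spec t w c x hc hx1 hxs
    have h2 := psiA_spec t w c y hc hy1 hys
    rcases h1 with ⟨h1a, h1b⟩ | ⟨h1a, h1b⟩ <;>
      rcases h2 with ⟨h2a, h2b⟩ | ⟨h2a, h2b⟩ <;> omega
  -- the two families never collide
  have hcross : ∀ x y : ℕ, 1 ≤ x → 1 ≤ y →
      (x ≤ t ∨ t + w + 1 ≤ x) → (y ≤ t ∨ t + w + 1 ≤ y) →
      psiA t w 0 x ≠ psiA t w 1 y := by
    intro x y hx1 hy1 hxs hys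
    have h1 := psiA_spec t w 0 x (by omega) hx1 hxs
    have h2 := psiA_spec t w 1 y (by omega) hy1 hys
    rcases h1 with ⟨h1a, h1b⟩ | ⟨h1a, h1b⟩ <;>
      rcases h2 with ⟨h2a, h2b⟩ | ⟨h2a, h2b⟩ <;> omega
  -- images are Golomb rulers
  have hgolI : ∀ c, c ≤ 1 → ∀ i, IsGolomb ((F i).image (psiA t w c)) := by
    intro c hc i p hp q hq r hr s hs hpq hrs heq
    obtain ⟨x1, hx1, rfl⟩ := Finset.mem_image.mp hp
    obtain ⟨x2, hx2, rfl⟩ := Finset.mem_image.mp hq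
    obtain ⟨x3, hx3, rfl⟩ := Finset.mem_image.mp hr
    obtain ⟨x4, hx4, rfl⟩ := Finset.mem_image.mp hs
    obtain ⟨ha1, hb1, hs1⟩ := hmem i x1 hx1
    obtain ⟨ha2, hb2, hs2⟩ := hmem i x2 hx2
    obtain ⟨ha3, hb3, hs3⟩ := hmem i x3 hx3
    obtain ⟨ha4, hb4, hs4⟩ := hmem i x4 hx4
    have e1 := psiA_spec t w c x1 hc ha1 hs1
    have e2 := psiA_spec t w c x2 hc ha2 hs2
    have e3 := psiA_spec t w c x3 hc ha3 hs3
    have e4 := psiA_spec t w c x4 hc ha4 hs4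
    have hne12 : x1 ≠ x2 := fun h => hpq (by rw [h])
    have hne34 : x3 ≠ x4 := fun h => hrs (by rw [h])
    have key : (x1 : ℤ) - x2 = (x3 : ℤ) - x4 := by
      rcases e1 with ⟨e1a, e1b⟩ | ⟨e1a, e1b⟩ <;>
        rcases e2 with ⟨e2a, e2b⟩ | ⟨e2a, e2b⟩ <;>
        rcases e3 with ⟨e3a, e3b⟩ | ⟨e3a, e3b⟩ <;>
        rcases e4 with ⟨e4a, e4b⟩ | ⟨e4a, e4b⟩ <;> omega
    obtain ⟨h13, h24⟩ := hgol0 i x1 hx1 x2 hx2 x3 hx3 x4 hx4 hne12 hne34 key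
    subst h13; subst h24
    exact ⟨rfl, rfl⟩
  -- images stay inside `[1, 2n - 2w]`
  have hbnd : ∀ c, c ≤ 1 → ∀ i,
      (F i).image (psiA t w c) ⊆ Finset.Icc 1 (2*n - 2*w) := by
    intro c hc i z hz
    obtain ⟨x, hx, rfl⟩ := Finset.mem_image.mp hz
    obtain ⟨hx1, hxn, hxs⟩ := hmem i x hx
    have h1 := psiA_spec t w c x hc hx1 hxs
    rw [Finset.mem_Icc]
    rcases h1 with ⟨h1a, h1b⟩ | ⟨h1a, h1b⟩ <;> rcases hwn with h | h <;> omega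
  -- the doubled family
  refine Nat.sInf_le ?_
  refine ⟨?_, ?_⟩
  · -- positivity of 2n - 2w
    have hne : (F ⟨0, by omega⟩).Nonempty := by
      rw [← Finset.card_pos, hcard]; omega
    obtain ⟨x, hx⟩ := hne
    obtain ⟨hx1, hxn, hxs⟩ := hmem _ x hx
    rcases hwn with h | h <;> omega
  · refine ⟨fun k => if h : (k : ℕ) < a
        then (F ⟨(k : ℕ), h⟩).image (psiA t w 0)
        else (F ⟨(k : ℕ) - a, by have := k.isLt; omega⟩).image (psiA t w 1),
      ?_, ?_, ?_, ?_⟩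
    · intro k
      dsimp only
      by_cases h : (k : ℕ) < a
      · rw [dif_pos h, Finset.card_image_of_injOn, hcard]
        intro x hxm y hym hxy
        rw [Finset.mem_coe] at hxm hym
        obtain ⟨hx1, hxn, hxs⟩ := hmem _ x hxm
        obtain ⟨hy1, hyn, hys⟩ := hmem _ y hym
        exact hinj _ (by omega) x y hx1 hy1 hxs hys hxy
      · rw [dif_neg h, Finset.card_image_of_injOn, hcard]
        intro x hxm y hym hxy
        rw [Finset.mem_coe] at hxm hym
        obtain ⟨hx1, hxn, hxs⟩ := hmem _ x hxm
        obtain ⟨hy1, hyn, hys⟩ := hmem _ y hym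
        exact hinj _ (by omega) x y hx1 hy1 hxs hys hxy
    · intro k
      dsimp only
      by_cases h : (k : ℕ) < a
      · rw [dif_pos h]; exact hgolI 0 (by omega) _
      · rw [dif_neg h]; exact hgolI 1 (by omega) _
    · intro k
      dsimp only
      by_cases h : (k : ℕ) < a
      · rw [dif_pos h]; exact hbnd 0 (by omega) _
      · rw [dif_neg h]; exact hbnd 1 (by omega) _
    · intro k l hkl
      have hklv : (k : ℕ) ≠ (l : ℕ) := fun h => hkl (Fin.ext h)
      rw [Finset.disjoint_left]
      intro z hzk hzl
      dsimp only at hzk hzl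
      by_cases hk : (k : ℕ) < a <;> by_cases hl : (l : ℕ) < a
      · rw [dif_pos hk] at hzk; rw [dif_pos hl] at hzl
        obtain ⟨x, hxm, hxe⟩ := Finset.mem_image.mp hzk
        obtain ⟨y, hym, hye⟩ := Finset.mem_image.mp hzl
        obtain ⟨hx1, hxn, hxs⟩ := hmem _ x hxm
        obtain ⟨hy1, hyn, hys⟩ := hmem _ y hym
        have hxy : x = y :=
          hinj 0 (by omega) x y hx1 hy1 hxs hys (hxe.trans hye.symm)
        subst hxy
        have hij : (⟨(k : ℕ), hk⟩ : Fin a) ≠ ⟨(l : ℕ), hl⟩ := by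
          simp only [ne_eq, Fin.mk.injEq]; exact hklv
        exact Finset.disjoint_left.mp (hdis0 _ _ hij) hxm hym
      · rw [dif_pos hk] at hzk; rw [dif_neg hl] at hzl
        obtain ⟨x, hxm, hxe⟩ := Finset.mem_image.mp hzk
        obtain ⟨y, hym, hye⟩ := Finset.mem_image.mp hzl
        obtain ⟨hx1, hxn, hxs⟩ := hmem _ x hxm
        obtain ⟨hy1, hyn, hys⟩ := hmem _ y hym
        exact hcross x y hx1 hy1 hxs hys (hxe.trans hye.symm)
      · rw [dif_neg hk] at hzk; rw [dif_pos hl] at hzl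
        obtain ⟨x, hxm, hxe⟩ := Finset.mem_image.mp hzk
        obtain ⟨y, hym, hye⟩ := Finset.mem_image.mp hzl
        obtain ⟨hx1, hxn, hxs⟩ := hmem _ x hxm
        obtain ⟨hy1, hyn, hys⟩ := hmem _ y hym
        exact hcross y x hy1 hx1 hys hxs (hye.trans hxe.symm)
      · rw [dif_neg hk] at hzk; rw [dif_neg hl] at hzl
        obtain ⟨x, hxm, hxe⟩ := Finset.mem_image.mp hzk
        obtain ⟨y, hym, hye⟩ := Finset.mem_image.mp hzl
        obtain ⟨hx1, hxn, hxs⟩ := hmem _ x hxm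
        obtain ⟨hy1, hyn, hys⟩ := hmem _ y hym
        have hxy : x = y :=
          hinj 1 (by omega) x y hx1 hy1 hxs hys (hxe.trans hye.symm)
        subst hxy
        have hij : (⟨(k : ℕ) - a, by have := k.isLt; omega⟩ : Fin a) ≠
            ⟨(l : ℕ) - a, by have := l.isLt; omega⟩ := by
          simp only [ne_eq, Fin.mk.injEq]; omega
        exact Finset.disjoint_left.mp (hdis0 _ _ hij) hxm hym
end

section
/- Let J ≥ 3 and a, b ≥ 1 with H(a,J) ≥ aJ+1. Then H(a+b,J) ≤ H(a,J) + H(b,J) − ⌈(H(a,J) − aJ)/(aJ − 1)⌉ and H(2a,J) ≤ 2·H(a,J) − 2·⌈(H(a,J) − aJ)/(aJ − 1)⌉. -/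
/-!
Let `m = H a J`. An optimal `(a, J)`-DGR in `{1, …, m}` uses both `1` and `m` and has only
`aJ` marks, so by pigeonhole two consecutive marks enclose a gap of `g ≥ ⌈(m - aJ)/(aJ - 1)⌉`
free points. Pulling the two blocks on either side of a gap apart or together keeps every ruler
Golomb as long as the differences inside a block stay shorter than the differences across the
gap. This lets a `(b, J)`-DGR be spliced into the gap, or a reflected copy of the family be
interleaved with itself, saving at least `g` points each time.
-/

open Finset

lemma IsGolomb.image {R : Finset ℕ} (hR : IsGolomb R) {ψ : ℕ → ℕ} {ρ : ℤ → ℤ}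
    (hρ : ∀ x ∈ R, ∀ y ∈ R, ρ (ψ x - ψ y) = x - y) : IsGolomb (R.image ψ) := by
  simp only [IsGolomb, mem_image]
  rintro _ ⟨x, hx, rfl⟩ _ ⟨y, hy, rfl⟩ _ ⟨z, hz, rfl⟩ _ ⟨t, ht, rfl⟩ hxy hzt heq
  have hdiff : (x : ℤ) - y = z - t := by rw [← hρ x hx y hy, ← hρ z hz t ht, heq]
  obtain ⟨rfl, rfl⟩ := hR x hx y hy z hz t ht (by rintro rfl; exact hxy rfl)
    (by rintro rfl; exact hzt rfl) hdiff
  exact ⟨rfl, rfl⟩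

lemma pow_four_add_lt {x y u : ℕ} (hx : x < u) (hy : y < u) : 4 ^ x + 4 ^ y < 4 ^ u := by
  have hx' : 4 ^ x ≤ 4 ^ (u - 1) := Nat.pow_le_pow_right (by norm_num) (by omega)
  have hy' : 4 ^ y ≤ 4 ^ (u - 1) := Nat.pow_le_pow_right (by norm_num) (by omega)
  have hu : 4 ^ u = 4 ^ (u - 1) * 4 := by rw [← pow_succ, Nat.sub_add_cancel (by omega)]
  have : 0 < 4 ^ (u - 1) := by positivity
  omega

lemma pow_four_add_pow_four_inj {i j k l : ℕ} (h : 4 ^ i + 4 ^ j = 4 ^ k + 4 ^ l) :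
    (i = k ∧ j = l) ∨ (i = l ∧ j = k) := by
  wlog hij : i ≤ j generalizing i j
  · have := this (j := i) (i := j) (by rwa [add_comm]) (by omega)
    omega
  wlog hkl : k ≤ l generalizing k l
  · have := this (k := l) (l := k) (by rw [h, add_comm]) (by omega)
    omega
  have hjl : j = l := by
    by_contra hne
    rcases Nat.lt_or_gt_of_ne hne with hlt | hlt
    · have := pow_four_add_lt (hij.trans_lt hlt) hlt
      have : 0 < 4 ^ k := by positivity
      omega
    · have := pow_four_add_lt (hkl.trans_lt hlt) hlt
      have : 0 < 4 ^ i := by positivity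
      omega
  subst hjl
  exact Or.inl ⟨Nat.pow_right_injective (by norm_num : 2 ≤ 4) (show 4 ^ i = 4 ^ k by omega), rfl⟩

lemma isGolomb_image_pow_four (s : Finset ℕ) : IsGolomb (s.image (4 ^ ·)) := by
  simp only [IsGolomb, mem_image]
  rintro _ ⟨i, -, rfl⟩ _ ⟨j, -, rfl⟩ _ ⟨k, -, rfl⟩ _ ⟨l, -, rfl⟩ hij - heq
  have hsum : 4 ^ i + 4 ^ l = 4 ^ k + 4 ^ j := by omega
  rcases pow_four_add_pow_four_inj hsum with ⟨rfl, rfl⟩ | ⟨rfl, rfl⟩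
  · exact ⟨rfl, rfl⟩
  · exact absurd rfl hij

namespace HasDGRin

variable {I J : ℕ} {A B : Finset ℕ}

lemma map (h : HasDGRin I J A) (ψ : ℕ → ℕ) (ρ : ℤ → ℤ) (hψ : ∀ x ∈ A, ψ x ∈ B)
    (hρ : ∀ x ∈ A, ∀ y ∈ A, ρ (ψ x - ψ y) = x - y) : HasDGRin I J B := by
  obtain ⟨F, hcard, hgol, hsub, hdisj⟩ := h
  have hinj : Set.InjOn ψ A := fun x hx y hy hxy => by
    have hx' := hρ x hx y hy
    rw [hxy, hρ y hy y hy] at hx'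
    omega
  refine ⟨fun i => (F i).image ψ, fun i => ?_, fun i => ?_, fun i => ?_, fun i j hij => ?_⟩
  · rw [card_image_of_injOn (hinj.mono (hsub i)), hcard]
  · exact (hgol i).image fun x hx y hy => hρ x (hsub i hx) y (hsub i hy)
  · simpa only [image_subset_iff] using fun x hx => hψ x (hsub i hx)
  · simp only [disjoint_left, mem_image, not_exists, not_and]
    rintro _ ⟨x, hx, rfl⟩ y hy hyx
    rw [hinj (hsub j hy) (hsub i hx) hyx] at hy
    exact disjoint_left.mp (hdisj i j hij) hx hy

lemma mono (h : HasDGRin I J A) (hAB : A ⊆ B) : HasDGRin I J B :=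
  h.map id id (fun _ hx => hAB hx) fun _ _ _ _ => rfl

lemma translate (h : HasDGRin I J A) (c : ℕ) (hB : ∀ x ∈ A, x + c ∈ B) : HasDGRin I J B :=
  h.map (· + c) id hB fun _ _ _ _ => by simp

lemma of_le {I' : ℕ} (h : HasDGRin I J A) (hI : I' ≤ I) : HasDGRin I' J A := by
  obtain ⟨F, hcard, hgol, hsub, hdisj⟩ := h
  exact ⟨F ∘ Fin.castLE hI, fun i => hcard _, fun i => hgol _, fun i => hsub _,
    fun i j hij => hdisj _ _ ((Fin.castLE_injective hI).ne hij)⟩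

lemma add {I₁ I₂ : ℕ} (hA : HasDGRin I₁ J A) (hB : HasDGRin I₂ J B) (hAB : Disjoint A B) :
    HasDGRin (I₁ + I₂) J (A ∪ B) := by
  obtain ⟨F, hFc, hFg, hFs, hFd⟩ := hA
  obtain ⟨G, hGc, hGg, hGs, hGd⟩ := hB
  refine ⟨Fin.append F G, fun i => ?_, fun i => ?_, fun i => ?_, fun i j hij => ?_⟩
  · induction i using Fin.addCases <;> simp [hFc, hGc]
  · induction i using Fin.addCases <;> simp [hFg, hGg]
  · induction i using Fin.addCases <;> simp only [Fin.append_left, Fin.append_right]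
    · exact (hFs _).trans subset_union_left
    · exact (hGs _).trans subset_union_right
  · induction i using Fin.addCases <;> induction j using Fin.addCases <;>
      simp only [Fin.append_left, Fin.append_right]
    · exact hFd _ _ fun h => hij (by rw [h])
    · exact hAB.mono (hFs _) (hGs _)
    · exact (hAB.mono (hFs _) (hGs _)).symm
    · exact hGd _ _ fun h => hij (by rw [h])

lemma add_sdiff {I₁ I₂ : ℕ} {C : Finset ℕ} (hA : HasDGRin I₁ J A) (hB : HasDGRin I₂ J (C \ A))
    (hAC : A ⊆ C) : HasDGRin (I₁ + I₂) J C :=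
  (hA.add hB disjoint_sdiff).mono (union_subset hAC sdiff_subset)

end HasDGRin

lemma hasDGRin_zero (J : ℕ) (A : Finset ℕ) : HasDGRin 0 J A :=
  ⟨Fin.elim0, Fin.rec0, Fin.rec0, Fin.rec0, Fin.rec0⟩

lemma hasDGRin_one {R A : Finset ℕ} (hR : IsGolomb R) (hRA : R ⊆ A) : HasDGRin 1 R.card A :=
  ⟨fun _ => R, fun _ => rfl, fun _ => hR, fun _ => hRA,
    fun i j hij => absurd (Subsingleton.elim i j) hij⟩

lemma hasDGRin_one_Icc_four_pow (J : ℕ) : HasDGRin 1 J (Icc 1 (4 ^ J)) := by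
  have hcard : ((range J).image (4 ^ ·)).card = J := by
    rw [card_image_of_injective _ (Nat.pow_right_injective (by norm_num)), card_range]
  have hsub : (range J).image (4 ^ ·) ⊆ Icc 1 (4 ^ J) := fun x hx => by
    obtain ⟨j, hj, rfl⟩ := mem_image.mp hx
    exact mem_Icc.mpr ⟨Nat.one_le_pow _ _ (by norm_num),
      Nat.pow_le_pow_right (by norm_num) (mem_range.mp hj).le⟩
  simpa only [hcard] using hasDGRin_one (isGolomb_image_pow_four _) hsub

lemma HasDGRin.stack {J C : ℕ} (h : HasDGRin 1 J (Icc 1 C)) :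
    ∀ I, HasDGRin I J (Icc 1 (I * C))
  | 0 => hasDGRin_zero J _
  | I + 1 => by
    refine (HasDGRin.stack h I).add_sdiff (h.translate (I * C) fun x hx => ?_) ?_
    · simp only [mem_sdiff, mem_Icc, add_mul, one_mul] at hx ⊢
      omega
    · exact Icc_subset_Icc_right (by rw [add_mul, one_mul]; omega)

lemma H_le_of_hasDGRin {I J N : ℕ} (hN : 0 < N) (h : HasDGRin I J (Icc 1 N)) : H I J ≤ N :=
  Nat.sInf_le ⟨hN, h⟩

lemma H_spec_s17 (I J : ℕ) : 0 < H I J ∧ HasDGRin I J (Icc 1 (H I J)) :=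
  Nat.sInf_mem (s := {n | 0 < n ∧ HasDGRin I J (Icc 1 n)}) ⟨(I + 1) * 4 ^ J, by positivity,
    ((hasDGRin_one_Icc_four_pow J).stack (I + 1)).of_le I.le_succ⟩

lemma H_le_of_hasDGRin_Icc {I J l r : ℕ} (h : HasDGRin I J (Icc l r)) (hlr : l ≤ r) :
    H I J ≤ r + 1 - l :=
  H_le_of_hasDGRin (by omega) <| h.map (· + 1 - l) id
    (fun x hx => by simp only [mem_Icc] at hx ⊢; omega)
    fun x hx y hy => by simp only [mem_Icc] at hx hy; simp only [id]; omega

lemma HasDGRin.one_mem_and_H_mem {I J : ℕ} {S : Finset ℕ} (h : HasDGRin I J S)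
    (hS : S ⊆ Icc 1 (H I J)) (hH : 2 ≤ H I J) : 1 ∈ S ∧ H I J ∈ S := by
  have hne : ∀ {y}, y ∉ S → ∀ x ∈ S, x ≠ y := fun hy _ hx hxy => hy (hxy ▸ hx)
  constructor <;> by_contra hmem
  · have := H_le_of_hasDGRin_Icc (h.mono fun x hx => ?_) hH
    · omega
    have hx' := mem_Icc.mp (hS hx)
    have := hne hmem x hx
    exact mem_Icc.mpr ⟨by omega, hx'.2⟩
  · have := H_le_of_hasDGRin_Icc (h.mono fun x hx => ?_) (by omega : 1 ≤ H I J - 1)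
    · omega
    have hx' := mem_Icc.mp (hS hx)
    have := hne hmem x hx
    exact mem_Icc.mpr ⟨hx'.1, by omega⟩

lemma HasDGRin.exists_subset_card_le {I J : ℕ} {A : Finset ℕ} (h : HasDGRin I J A) :
    ∃ S ⊆ A, HasDGRin I J S ∧ #S ≤ I * J := by
  obtain ⟨F, hcard, hgol, hsub, hdisj⟩ := h
  refine ⟨univ.biUnion F, biUnion_subset.mpr fun i _ => hsub i,
    ⟨F, hcard, hgol, fun i => subset_biUnion_of_mem F (mem_univ i), hdisj⟩, ?_⟩
  calc #(univ.biUnion F) ≤ ∑ i, #(F i) := card_biUnion_le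
    _ = I * J := by simp [hcard]

lemma IsGolomb.card_lt {R : Finset ℕ} {N : ℕ} (hR : IsGolomb R) (h3 : 3 ≤ #R)
    (hRN : R ⊆ Icc 1 N) : #R < N := by
  have hle : #R ≤ N := by simpa using card_le_card hRN
  refine hle.lt_of_ne fun hN => ?_
  have hRI : R = Icc 1 N := eq_of_subset_of_card_le hRN (by simp [hN])
  have mem : ∀ x, 1 ≤ x → x ≤ 3 → x ∈ R := fun x h1 h3 => hRI ▸ mem_Icc.mpr ⟨h1, by omega⟩
  have := hR 2 (mem 2 (by norm_num) (by norm_num)) 1 (mem 1 le_rfl (by norm_num))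
    3 (mem 3 (by norm_num) le_rfl) 2 (mem 2 (by norm_num) (by norm_num))
    (by norm_num) (by norm_num) (by norm_num)
  omega

lemma lt_H_one {J : ℕ} (hJ : 3 ≤ J) : J < H 1 J := by
  obtain ⟨F, hcard, hgol, hsub, -⟩ := (H_spec_s17 1 J).2
  simpa [hcard] using (hgol 0).card_lt (by rw [hcard]; exact hJ) (hsub 0)

lemma H_one_le_H {I J : ℕ} (hI : 1 ≤ I) : H 1 J ≤ H I J :=
  H_le_of_hasDGRin (H_spec_s17 I J).1 ((H_spec_s17 I J).2.of_le hI)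

lemma H_le_mul_H_one {I J : ℕ} (hI : 1 ≤ I) : H I J ≤ I * H 1 J :=
  H_le_of_hasDGRin (Nat.mul_pos hI (H_spec_s17 1 J).1) ((H_spec_s17 1 J).2.stack I)

lemma exists_consecutive_gap {S : Finset ℕ} {x y : ℕ} (hx : x ∈ S) (hy : y ∈ S) (W : ℕ)
    (h : (#S - 1) * W < y - x) :
    ∃ p ∈ S, ∃ q ∈ S, p + W < q ∧ ∀ z ∈ S, z ≤ p ∨ q ≤ z := by
  by_contra! hS
  set e := S.orderEmbOfFin rfl
  have he : ∀ z ∈ S, ∃ i, e i = z := fun z hz => by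
    rw [← Set.mem_range, S.range_orderEmbOfFin rfl]
    exact hz
  have hpos : 0 < #S := card_pos.mpr ⟨x, hx⟩
  have step : ∀ i (hi : i + 1 < #S), e ⟨i + 1, hi⟩ ≤ e ⟨i, by omega⟩ + W := by
    intro i hi
    by_contra! hlt
    obtain ⟨z, hz, h1, h2⟩ := hS _ (S.orderEmbOfFin_mem rfl _) _ (S.orderEmbOfFin_mem rfl _) hlt
    obtain ⟨j, rfl⟩ := he z hz
    rw [e.lt_iff_lt, Fin.lt_def] at h1 h2
    simp only at h1 h2
    omega
  have bound : ∀ i (hi : i < #S), e ⟨i, hi⟩ ≤ e ⟨0, hpos⟩ + i * W := by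
    intro i
    induction i with
    | zero => simp
    | succ i ih =>
      intro hi
      have := step i hi
      have := ih (by omega)
      rw [add_mul, one_mul]
      omega
  obtain ⟨i, rfl⟩ := he x hx
  obtain ⟨j, rfl⟩ := he y hy
  have h0 : e ⟨0, hpos⟩ ≤ e i := e.monotone (Nat.zero_le _)
  have hj : e j ≤ _ := bound j j.isLt
  have : j * W ≤ (#S - 1) * W := Nat.mul_le_mul_right _ (by omega)
  omega

lemma two_mul_div_le {a J h m : ℕ} (ha : 1 ≤ a) (hJ : 3 ≤ J) (hh : J < h) (hm : m ≤ a * h) :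
    2 * ((m - 2) / (a * J - 1)) ≤ h - 1 := by
  have haJ : 3 ≤ a * J := le_mul_of_one_le_of_le ha hJ
  have key : 2 * (a * h - 2) ≤ (h - 1) * (a * J - 1) := by
    have ha' : (0 : ℤ) ≤ (a : ℤ) - 1 := by omega
    have hJ' : (0 : ℤ) ≤ (J : ℤ) - 3 := by omega
    have hh' : (0 : ℤ) ≤ (h : ℤ) - J - 1 := by omega
    zify [show 2 ≤ a * h by nlinarith, show 1 ≤ h by omega, show 1 ≤ a * J by omega]
    nlinarith [mul_nonneg ha' hJ', mul_nonneg ha' hh', mul_nonneg hJ' hh',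
      mul_nonneg (mul_nonneg ha' hJ') hJ', mul_nonneg (mul_nonneg ha' hJ') hh']
  refine Nat.le_of_mul_le_mul_right ?_ (by omega : 0 < a * J - 1)
  calc 2 * ((m - 2) / (a * J - 1)) * (a * J - 1)
      ≤ 2 * (m - 2) := by rw [mul_assoc]; exact Nat.mul_le_mul_left 2 (Nat.div_mul_le_self _ _)
    _ ≤ 2 * (a * h - 2) := by omega
    _ ≤ (h - 1) * (a * J - 1) := key

def gapped (p g s : ℕ) : Finset ℕ := Icc 1 p ∪ Icc (p + g + 1) (p + g + s)

lemma mem_gapped {p g s x : ℕ} :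
    x ∈ gapped p g s ↔ 1 ≤ x ∧ x ≤ p ∨ p + g + 1 ≤ x ∧ x ≤ p + g + s := by
  simp [gapped]

namespace HasDGRin

variable {I J p g s : ℕ}

/-- Differences inside a block are at most `g'` and those across the gap exceed `g'`, so the
old differences can be read off the new ones. -/
lemma regap (h : HasDGRin I J (gapped p g s)) (g' : ℕ) (hp : p ≤ g' + 1) (hs : s ≤ g' + 1) :
    HasDGRin I J (gapped p g' s) := by
  refine h.map (fun x => if x ≤ p then x else x + g' - g)
    (fun d => if (g' : ℤ) < d then d - g' + g else if d < -(g' : ℤ) then d + g' - g else d) ?_ ?_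
  · intro x hx
    rw [mem_gapped] at hx ⊢
    split_ifs <;> omega
  · intro x hx y hy
    rw [mem_gapped] at hx hy
    split_ifs <;> omega

lemma gapped_swap (h : HasDGRin I J (gapped p g s)) : HasDGRin I J (gapped s g p) :=
  h.map (fun x => p + g + s + 1 - x) (fun d => -d)
    (fun x hx => by rw [mem_gapped] at hx ⊢; omega)
    fun x hx y hy => by rw [mem_gapped] at hx hy; omega

end HasDGRin

section Splicing

variable {a b J p g s n : ℕ}

lemma hasDGRin_insert (hA : HasDGRin a J (gapped p g s)) (hB : HasDGRin b J (Icc 1 n))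
    (hp : p ≤ n + 1) (hs : s ≤ n + 1) : HasDGRin (a + b) J (Icc 1 (p + n + s)) :=
  (hA.regap n hp hs).add_sdiff
    (hB.translate p fun x hx => by simp only [mem_sdiff, mem_gapped, mem_Icc] at hx ⊢; omega)
    fun x hx => by simp only [mem_gapped, mem_Icc] at hx ⊢; omega

lemma hasDGRin_splice {W : ℕ} (hA : HasDGRin a J (gapped p g s)) (hB : HasDGRin b J (Icc 1 n))
    (hWg : W ≤ g) (hWn : 2 * W ≤ n) (hn : n ≤ g + s + 1) :
    HasDGRin (a + b) J (Icc 1 (p + g + s + n - W)) := by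
  -- the last `W` points of `{1, …, n}` go into the gap, the first `n - W` after `p + g + s`
  have hB' : HasDGRin b J (gapped (n - W) 0 W) :=
    hB.mono fun x hx => by simp only [mem_gapped, mem_Icc] at hx ⊢; omega
  have hB'' := (hB'.regap (g + s - W) (by omega) (by omega)).gapped_swap
  exact hA.add_sdiff
    (hB''.translate p fun x hx => by simp only [mem_sdiff, mem_gapped, mem_Icc] at hx ⊢; omega)
    fun x hx => by simp only [mem_gapped, mem_Icc] at hx ⊢; omega

lemma hasDGRin_add_of_gapped {W : ℕ} (hA : HasDGRin a J (gapped p g s))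
    (hB : HasDGRin b J (Icc 1 n)) (hWg : W ≤ g) (hWn : 2 * W ≤ n) :
    HasDGRin (a + b) J (Icc 1 (p + g + s + n - W)) := by
  by_cases hs : n ≤ g + s + 1
  · exact hasDGRin_splice hA hB hWg hWn hs
  by_cases hp : n ≤ g + p + 1
  · convert hasDGRin_splice hA.gapped_swap hB hWg hWn hp using 3
    omega
  exact (hasDGRin_insert hA hB (by omega) (by omega)).mono (Icc_subset_Icc_right (by omega))

lemma hasDGRin_double (hA : HasDGRin a J (gapped p g s)) :
    HasDGRin (a + a) J (Icc 1 (2 * p + 2 * s)) := by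
  wlog hps : p ≤ s generalizing p s
  · have := this hA.gapped_swap (by omega)
    rwa [Nat.add_comm (2 * s)] at this
  have hA' := hA.regap s (by omega) (by omega)
  -- the reflected copy, shifted by `p`, fills exactly the holes of `hA'` in `{1, …, 2p + 2s}`
  exact hA'.add_sdiff
    (hA'.gapped_swap.translate p fun x hx => by
      simp only [mem_sdiff, mem_gapped, mem_Icc] at hx ⊢; omega)
    fun x hx => by simp only [mem_gapped, mem_Icc] at hx ⊢; omega

end Splicing

lemma exists_hasDGRin_gapped {I J W : ℕ} (hH : 2 ≤ H I J) (hW : (I * J - 1) * W ≤ H I J - 2) :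
    ∃ p g s, HasDGRin I J (gapped p g s) ∧ 0 < p ∧ p + g + s = H I J ∧ W ≤ g := by
  obtain ⟨S, hSsub, hS, hcard⟩ := (H_spec_s17 I J).2.exists_subset_card_le
  obtain ⟨h1, hm⟩ := hS.one_mem_and_H_mem hSsub hH
  have hSW : (#S - 1) * W < H I J - 1 :=
    ((Nat.mul_le_mul_right W (by omega : #S - 1 ≤ I * J - 1)).trans hW).trans_lt (by omega)
  obtain ⟨p, hp, q, hq, hpq, hgap⟩ := exists_consecutive_gap h1 hm W hSW
  have hp' := mem_Icc.mp (hSsub hp)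
  have hq' := mem_Icc.mp (hSsub hq)
  refine ⟨p, q - p - 1, H I J + 1 - q, hS.mono fun z hz => ?_, by omega, by omega, by omega⟩
  have := mem_Icc.mp (hSsub hz)
  rw [mem_gapped]
  rcases hgap z hz with h | h <;> omega

theorem H_add_gap_bound (a b J : ℕ) (ha : 1 ≤ a) (hb : 1 ≤ b) (hJ : 3 ≤ J)
    (hn' : a * J + 1 ≤ H a J) :
    H (a + b) J ≤ H a J + H b J -
        (H a J - a * J + (a * J - 1) - 1) / (a * J - 1) ∧
    H (2 * a) J ≤ 2 * H a J -
        2 * ((H a J - a * J + (a * J - 1) - 1) / (a * J - 1)) := by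
  have haJ : 3 ≤ a * J := le_mul_of_one_le_of_le ha hJ
  have hW : (H a J - a * J + (a * J - 1) - 1) / (a * J - 1) = (H a J - 2) / (a * J - 1) := by
    congr 1
    generalize a * J = k at haJ hn' ⊢
    omega
  rw [hW]
  set W := (H a J - 2) / (a * J - 1)
  obtain ⟨p, g, s, hA, hp, hpgs, hgW⟩ := exists_hasDGRin_gapped (I := a) (J := J) (W := W)
    (by omega) (by rw [mul_comm]; exact Nat.div_mul_le_self _ _)
  have h2W : 2 * W ≤ H b J := by
    have := two_mul_div_le ha hJ (lt_H_one hJ) (H_le_mul_H_one ha)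
    have := H_one_le_H (J := J) hb
    omega
  constructor
  · exact (H_le_of_hasDGRin (by omega) (hasDGRin_add_of_gapped hA (H_spec_s17 b J).2 hgW h2W)).trans
      (by omega)
  · rw [two_mul a]
    exact (H_le_of_hasDGRin (by omega) (hasDGRin_double hA)).trans (by omega)
end

section
/- Let J ≥ 3 and I₁ < I₂ be positive integers. Suppose H(i,J) ≤ iJ + 1 for every even i in {I₁,...,I₂} and H(i,J) = iJ for every odd i in {I₁,...,I₂}. Then H(I,J) = I·J for every I in {2I₁,...,2I₂}. -/
namespace ARtoR
open Finset

/-- exact tiling of the finset `X` by `a` disjoint `J`-element Golomb rulers -/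
def Tiles (a J : ℕ) (X : Finset ℕ) : Prop :=
  ∃ F : Fin a → Finset ℕ, (∀ i, (F i).card = J) ∧ (∀ i, IsGolomb (F i)) ∧
    (∀ i j, i ≠ j → Disjoint (F i) (F j)) ∧ Finset.univ.biUnion F = X

lemma golomb_image {S : Finset ℕ} (hS : IsGolomb S) (φ : ℕ → ℕ)
    (hfaith : ∀ p ∈ S, ∀ q ∈ S, ∀ r ∈ S, ∀ t ∈ S,
      (φ p : ℤ) - φ q = (φ r : ℤ) - φ t → (p : ℤ) - q = (r : ℤ) - t) :
    IsGolomb (S.image φ) := by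
  intro a ha b hb c hc d hd hab hcd habcd
  simp only [Finset.mem_image] at ha hb hc hd
  obtain ⟨p, hp, rfl⟩ := ha; obtain ⟨q, hq, rfl⟩ := hb
  obtain ⟨r, hr, rfl⟩ := hc; obtain ⟨t, ht, rfl⟩ := hd
  have h1 : (p : ℤ) - q = (r : ℤ) - t := hfaith p hp q hq r hr t ht habcd
  have hpq : p ≠ q := by rintro rfl; exact hab rfl
  have hrt : r ≠ t := by rintro rfl; exact hcd rfl
  obtain ⟨h2, h3⟩ := hS p hp q hq r hr t ht hpq hrt h1
  exact ⟨by rw [h2], by rw [h3]⟩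

lemma Tiles.image {a J : ℕ} {X : Finset ℕ} (h : Tiles a J X) (φ : ℕ → ℕ)
    (hinj : ∀ p ∈ X, ∀ q ∈ X, φ p = φ q → p = q)
    (hfaith : ∀ p ∈ X, ∀ q ∈ X, ∀ r ∈ X, ∀ t ∈ X,
      (φ p : ℤ) - φ q = (φ r : ℤ) - φ t → (p : ℤ) - q = (r : ℤ) - t) :
    Tiles a J (X.image φ) := by
  obtain ⟨F, hcard, hgol, hdis, hun⟩ := h
  have hsub : ∀ i, F i ⊆ X := fun i =>
    hun ▸ Finset.subset_biUnion_of_mem F (Finset.mem_univ i)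
  refine ⟨fun i => (F i).image φ, ?_, ?_, ?_, ?_⟩
  · intro i
    rw [Finset.card_image_of_injOn fun p hp q hq => hinj p (hsub i hp) q (hsub i hq), hcard]
  · intro i
    exact golomb_image (hgol i) φ fun p hp q hq r hr t ht =>
      hfaith p (hsub i hp) q (hsub i hq) r (hsub i hr) t (hsub i ht)
  · intro i j hij
    rw [Finset.disjoint_left]
    rintro x hx hx'
    simp only [Finset.mem_image] at hx hx'
    obtain ⟨u, hu, rfl⟩ := hx
    obtain ⟨v, hv, hvu⟩ := hx'
    have hveq : v = u := hinj v (hsub j hv) u (hsub i hu) hvu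
    exact Finset.disjoint_left.mp (hdis i j hij) hu (hveq ▸ hv)
  · rw [← hun, Finset.biUnion_image]

lemma Tiles.add {a b J : ℕ} {X Y : Finset ℕ} (hX : Tiles a J X) (hY : Tiles b J Y)
    (hd : Disjoint X Y) : Tiles (a + b) J (X ∪ Y) := by
  obtain ⟨F, hFc, hFg, hFd, hFu⟩ := hX
  obtain ⟨G, hGc, hGg, hGd, hGu⟩ := hY
  have hFsub : ∀ i, F i ⊆ X := fun i =>
    hFu ▸ Finset.subset_biUnion_of_mem F (Finset.mem_univ i)
  have hGsub : ∀ i, G i ⊆ Y := fun i =>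
    hGu ▸ Finset.subset_biUnion_of_mem G (Finset.mem_univ i)
  refine ⟨Fin.addCases F G, ?_, ?_, ?_, ?_⟩
  · intro i
    induction i using Fin.addCases with
    | left i => simp [hFc]
    | right i => simp [hGc]
  · intro i
    induction i using Fin.addCases with
    | left i => simpa using hFg i
    | right i => simpa using hGg i
  · intro i j hij
    induction i using Fin.addCases with
    | left i =>
      induction j using Fin.addCases with
      | left j =>
        simp only [Fin.addCases_left]
        exact hFd i j fun h => hij (congrArg (Fin.castAdd b) h)
      | right j =>
        simp only [Fin.addCases_left, Fin.addCases_right]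
        exact hd.mono (hFsub i) (hGsub j)
    | right i =>
      induction j using Fin.addCases with
      | left j =>
        simp only [Fin.addCases_left, Fin.addCases_right]
        exact hd.symm.mono (hGsub i) (hFsub j)
      | right j =>
        simp only [Fin.addCases_right]
        exact hGd i j fun h => hij (congrArg (Fin.natAdd a) h)
  · ext x
    simp only [Finset.mem_biUnion, Finset.mem_univ, true_and, Finset.mem_union]
    constructor
    · rintro ⟨k, hk⟩
      induction k using Fin.addCases with
      | left i => left; exact hFsub i (by simpa using hk)
      | right i => right; exact hGsub i (by simpa using hk)
    · rintro (hx | hx)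
      · rw [← hFu] at hx
        simp only [Finset.mem_biUnion, Finset.mem_univ, true_and] at hx
        obtain ⟨i, hi⟩ := hx
        exact ⟨Fin.castAdd b i, by simpa using hi⟩
      · rw [← hGu] at hx
        simp only [Finset.mem_biUnion, Finset.mem_univ, true_and] at hx
        obtain ⟨i, hi⟩ := hx
        exact ⟨Fin.natAdd a i, by simpa using hi⟩


lemma mem_hole {h m x : ℕ} :
    x ∈ Icc 1 h \ {m} ↔ (1 ≤ x ∧ x ≤ h) ∧ x ≠ m := by
  simp [Finset.mem_sdiff, Finset.mem_Icc]

/-- concatenation of two perfect tilings -/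
lemma tiles_concat {a b J p q : ℕ} (h1 : Tiles a J (Icc 1 p)) (h2 : Tiles b J (Icc 1 q)) :
    Tiles (a + b) J (Icc 1 (p + q)) := by
  have h2' := h2.image (· + p)
    (by intro x _ y _ hxy; beta_reduce at hxy; omega)
    (by intro x _ y _ z _ w _ hx; push_cast at hx ⊢; omega)
  have himg : (Icc 1 q).image (· + p) = Icc (p + 1) (p + q) := by
    ext y
    simp only [Finset.mem_image, Finset.mem_Icc]
    constructor
    · rintro ⟨x, hx, rfl⟩; beta_reduce; omega
    · intro hy; refine ⟨y - p, by omega, ?_⟩; beta_reduce; omega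
  rw [himg] at h2'
  have hd : Disjoint (Icc 1 p) (Icc (p + 1) (p + q)) := by
    rw [Finset.disjoint_left]; intro x hx hx'
    simp only [Finset.mem_Icc] at hx hx'; omega
  have := h1.add h2' hd
  have hu : Icc 1 p ∪ Icc (p + 1) (p + q) = Icc 1 (p + q) := by
    ext x
    simp only [Finset.mem_union, Finset.mem_Icc]
    omega
  rwa [hu] at this

/-- layout L1 : holed family split at its hole, perfect block inserted -/
lemma combine_L1 {a b J h n m : ℕ} (h2 : 2 ≤ m) (hmh : m + 1 ≤ h) (hn : 1 ≤ n)
    (c1 : m < n + 3) (c2 : h < m + n + 2)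
    (hF : Tiles a J (Icc 1 h \ {m})) (hG : Tiles b J (Icc 1 n)) :
    Tiles (a + b) J (Icc 1 (h + n - 1)) := by
  have hF' := hF.image (fun x => if x < m then x else x + (n - 1))
    (by
      intro x hx y hy hxy
      rw [mem_hole] at hx hy
      split_ifs at hxy <;> omega)
    (by
      intro p hp q hq r hr t ht heq
      rw [mem_hole] at hp hq hr ht
      split_ifs at heq <;> omega)
  have himgF : (Icc 1 h \ {m}).image (fun x => if x < m then x else x + (n - 1)) =
      Icc 1 (m - 1) ∪ Icc (m + n) (h + n - 1) := by
    ext y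
    simp only [Finset.mem_image, Finset.mem_union, Finset.mem_Icc]
    constructor
    · rintro ⟨x, hx, rfl⟩
      rw [mem_hole] at hx
      split_ifs <;> omega
    · rintro (hy | hy)
      · exact ⟨y, mem_hole.mpr (by omega), by rw [if_pos (by omega)]⟩
      · exact ⟨y - (n - 1), mem_hole.mpr (by omega), by rw [if_neg (by omega)]; omega⟩
  rw [himgF] at hF'
  have hG' := hG.image (· + (m - 1))
    (by intro x _ y _ hxy; beta_reduce at hxy; omega)
    (by intro x _ y _ z _ w _ hx; push_cast at hx ⊢; omega)
  have himgG : (Icc 1 n).image (· + (m - 1)) = Icc m (m + n - 1) := by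
    ext y
    simp only [Finset.mem_image, Finset.mem_Icc]
    constructor
    · rintro ⟨x, hx, rfl⟩; beta_reduce; omega
    · intro hy; refine ⟨y - (m - 1), by omega, ?_⟩; beta_reduce; omega
  rw [himgG] at hG'
  have hd : Disjoint (Icc 1 (m - 1) ∪ Icc (m + n) (h + n - 1)) (Icc m (m + n - 1)) := by
    rw [Finset.disjoint_left]; intro x hx hx'
    simp only [Finset.mem_union, Finset.mem_Icc] at hx hx'; omega
  have := hF'.add hG' hd
  have hu : (Icc 1 (m - 1) ∪ Icc (m + n) (h + n - 1)) ∪ Icc m (m + n - 1) =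
      Icc 1 (h + n - 1) := by
    ext x
    simp only [Finset.mem_union, Finset.mem_Icc]
    omega
  rwa [hu] at this

/-- layout LA : holed family intact, one element of the perfect family moved into
the hole, the rest appended -/
lemma combine_LA {a b J h n m : ℕ} (h2 : 2 ≤ m) (hmh : m + 1 ≤ h) (hn : 1 ≤ n)
    (c1 : n + m < h + 3)
    (hF : Tiles a J (Icc 1 h \ {m})) (hG : Tiles b J (Icc 1 n)) :
    Tiles (a + b) J (Icc 1 (h + n - 1)) := by
  have hG' := hG.image (fun x => if x = 1 then m else x + (h - 1))
    (by
      intro x hx y hy hxy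
      simp only [Finset.mem_Icc] at hx hy
      split_ifs at hxy <;> omega)
    (by
      intro p hp q hq r hr t ht heq
      simp only [Finset.mem_Icc] at hp hq hr ht
      split_ifs at heq <;> omega)
  have himgG : (Icc 1 n).image (fun x => if x = 1 then m else x + (h - 1)) =
      insert m (Icc (h + 1) (h + n - 1)) := by
    ext y
    simp only [Finset.mem_image, Finset.mem_Icc, Finset.mem_insert]
    constructor
    · rintro ⟨x, hx, rfl⟩
      split_ifs <;> omega
    · rintro (rfl | hy)
      · exact ⟨1, by omega, by rw [if_pos rfl]⟩
      · exact ⟨y - (h - 1), by omega, by rw [if_neg (by omega)]; omega⟩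
  rw [himgG] at hG'
  have hd : Disjoint (Icc 1 h \ {m}) (insert m (Icc (h + 1) (h + n - 1))) := by
    rw [Finset.disjoint_left]; intro x hx hx'
    rw [mem_hole] at hx
    simp only [Finset.mem_insert, Finset.mem_Icc] at hx'; omega
  have := hF.add hG' hd
  have hu : Icc 1 h \ {m} ∪ insert m (Icc (h + 1) (h + n - 1)) = Icc 1 (h + n - 1) := by
    ext x
    simp only [Finset.mem_union, Finset.mem_insert, Finset.mem_Icc, mem_hole]
    omega
  rwa [hu] at this

/-- layout for two copies of the same holed family -/
lemma combine_C3 {a J h m : ℕ} (h2 : 2 ≤ m) (hmh : m + 1 ≤ h) (hm2 : 2 * m ≤ h + 1)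
    (hF : Tiles a J (Icc 1 h \ {m})) :
    Tiles (a + a) J (Icc 1 (h + h - 2)) := by
  have hF1 := hF.image (fun x => if x < m then x else x + (h - m - 1))
    (by
      intro x hx y hy hxy
      rw [mem_hole] at hx hy
      split_ifs at hxy <;> omega)
    (by
      intro p hp q hq r hr t ht heq
      rw [mem_hole] at hp hq hr ht
      split_ifs at heq <;> omega)
  have himg1 : (Icc 1 h \ {m}).image (fun x => if x < m then x else x + (h - m - 1)) =
      Icc 1 (m - 1) ∪ Icc h (h + h - m - 1) := by
    ext y
    simp only [Finset.mem_image, Finset.mem_union, Finset.mem_Icc]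
    constructor
    · rintro ⟨x, hx, rfl⟩
      rw [mem_hole] at hx
      split_ifs <;> omega
    · rintro (hy | hy)
      · exact ⟨y, mem_hole.mpr (by omega), by rw [if_pos (by omega)]⟩
      · exact ⟨y - (h - m - 1), mem_hole.mpr (by omega), by rw [if_neg (by omega)]; omega⟩
  rw [himg1] at hF1
  have hF2 := hF.image (fun x => if x < m then x + (2 * h - m - 1) else x - 1)
    (by
      intro x hx y hy hxy
      rw [mem_hole] at hx hy
      split_ifs at hxy <;> omega)
    (by
      intro p hp q hq r hr t ht heq
      rw [mem_hole] at hp hq hr ht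
      split_ifs at heq <;> omega)
  have himg2 : (Icc 1 h \ {m}).image (fun x => if x < m then x + (2 * h - m - 1) else x - 1) =
      Icc m (h - 1) ∪ Icc (2 * h - m) (h + h - 2) := by
    ext y
    simp only [Finset.mem_image, Finset.mem_union, Finset.mem_Icc]
    constructor
    · rintro ⟨x, hx, rfl⟩
      rw [mem_hole] at hx
      split_ifs <;> omega
    · rintro (hy | hy)
      · exact ⟨y + 1, mem_hole.mpr (by omega), by rw [if_neg (by omega)]; omega⟩
      · exact ⟨y - (2 * h - m - 1), mem_hole.mpr (by omega), by rw [if_pos (by omega)]; omega⟩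
  rw [himg2] at hF2
  have hd : Disjoint (Icc 1 (m - 1) ∪ Icc h (h + h - m - 1))
      (Icc m (h - 1) ∪ Icc (2 * h - m) (h + h - 2)) := by
    rw [Finset.disjoint_left]; intro x hx hx'
    simp only [Finset.mem_union, Finset.mem_Icc] at hx hx'; omega
  have := hF1.add hF2 hd
  have hu : (Icc 1 (m - 1) ∪ Icc h (h + h - m - 1)) ∪
      (Icc m (h - 1) ∪ Icc (2 * h - m) (h + h - 2)) = Icc 1 (h + h - 2) := by
    ext x
    simp only [Finset.mem_union, Finset.mem_Icc]
    omega
  rwa [hu] at this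

/-- reflection of a holed tiling -/
lemma tiles_reflect {a J h m : ℕ} (h1 : 1 ≤ m) (hmh : m ≤ h)
    (hF : Tiles a J (Icc 1 h \ {m})) : Tiles a J (Icc 1 h \ {h + 1 - m}) := by
  have hF' := hF.image (fun x => h + 1 - x)
    (by
      intro x hx y hy hxy
      rw [mem_hole] at hx hy
      omega)
    (by
      intro p hp q hq r hr t ht heq
      rw [mem_hole] at hp hq hr ht
      omega)
  have himg : (Icc 1 h \ {m}).image (fun x => h + 1 - x) = Icc 1 h \ {h + 1 - m} := by
    ext y
    simp only [Finset.mem_image, Finset.mem_sdiff, Finset.mem_Icc, Finset.mem_singleton]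
    constructor
    · rintro ⟨x, hx, rfl⟩
      omega
    · intro hy
      refine ⟨h + 1 - y, by omega, ?_⟩
      omega
  rwa [himg] at hF'

/-- a tiling of `[2, N+1]` shifts down to a tiling of `[1, N]` -/
lemma tiles_shift_down {a J N : ℕ} (hF : Tiles a J (Icc 2 (N + 1))) :
    Tiles a J (Icc 1 N) := by
  have hF' := hF.image (fun x => x - 1)
    (by
      intro x hx y hy hxy
      simp only [Finset.mem_Icc] at hx hy
      omega)
    (by
      intro p hp q hq r hr t ht heq
      simp only [Finset.mem_Icc] at hp hq hr ht
      beta_reduce at heq; omega)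
  have himg : (Icc 2 (N + 1)).image (fun x => x - 1) = Icc 1 N := by
    ext y
    simp only [Finset.mem_image, Finset.mem_Icc]
    constructor
    · rintro ⟨x, hx, rfl⟩; beta_reduce; omega
    · intro hy; refine ⟨y + 1, by omega, ?_⟩; beta_reduce; omega
  rwa [himg] at hF'


lemma dgr_mono {I J n n' : ℕ} {F : Fin I → Finset ℕ} (h : IsDGR I J n F) (hn : n ≤ n') :
    IsDGR I J n' F :=
  ⟨h.1, h.2.1, fun i => (h.2.2.1 i).trans (Finset.Icc_subset_Icc le_rfl hn), h.2.2.2⟩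

lemma card_bound {I J n : ℕ} {F : Fin I → Finset ℕ} (h : IsDGR I J n F) : I * J ≤ n := by
  obtain ⟨hc, hg, hsub, hdis⟩ := h
  have hU : Finset.univ.biUnion F ⊆ Icc 1 n :=
    Finset.biUnion_subset.mpr fun i _ => hsub i
  have hcard : (Finset.univ.biUnion F).card = I * J := by
    rw [Finset.card_biUnion fun i _ j _ hij => hdis i j hij]
    simp [hc, Finset.sum_const, Finset.card_univ, mul_comm]
  have hle := Finset.card_le_card hU
  rw [hcard, Nat.card_Icc] at hle
  omega

lemma tiles_card_eq {a J : ℕ} {X : Finset ℕ} (h : Tiles a J X) : X.card = a * J := by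
  obtain ⟨F, hc, hg, hdis, hun⟩ := h
  rw [← hun, Finset.card_biUnion fun i _ j _ hij => hdis i j hij]
  simp [hc, Finset.sum_const, Finset.card_univ, mul_comm]

lemma H_eq_of_tiles {I J : ℕ} (hI : 0 < I) (hJ : 0 < J)
    (ht : Tiles I J (Icc 1 (I * J))) : H I J = I * J := by
  obtain ⟨F, hc, hg, hdis, hun⟩ := ht
  have hsub : ∀ i, F i ⊆ Icc 1 (I * J) := fun i =>
    hun ▸ Finset.subset_biUnion_of_mem F (Finset.mem_univ i)
  have hmem : I * J ∈ {n | 0 < n ∧ ∃ F : Fin I → Finset ℕ, IsDGR I J n F} :=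
    ⟨Nat.mul_pos hI hJ, F, hc, hg, hsub, hdis⟩
  have hne : {n | 0 < n ∧ ∃ F : Fin I → Finset ℕ, IsDGR I J n F}.Nonempty := ⟨_, hmem⟩
  have hHmem := Nat.sInf_mem hne
  obtain ⟨hpos, G, hG⟩ := hHmem
  unfold H
  exact le_antisymm (Nat.sInf_le hmem) (card_bound hG)

lemma perfect_extract {b J : ℕ} (hb : 0 < b) (hJ : 0 < J) (hH : H b J = b * J) :
    Tiles b J (Icc 1 (b * J)) := by
  have hpos : 0 < b * J := Nat.mul_pos hb hJ
  have hne : {n | 0 < n ∧ ∃ F : Fin b → Finset ℕ, IsDGR b J n F}.Nonempty := by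
    by_contra hcon
    rw [Set.not_nonempty_iff_eq_empty] at hcon
    unfold H at hH
    rw [hcon, Nat.sInf_empty] at hH
    omega
  have hmem := Nat.sInf_mem hne
  unfold H at hH
  rw [hH] at hmem
  obtain ⟨-, F, hc, hg, hsub, hdis⟩ := hmem
  refine ⟨F, hc, hg, hdis, ?_⟩
  have hsub' : Finset.univ.biUnion F ⊆ Icc 1 (b * J) :=
    Finset.biUnion_subset.mpr fun i _ => hsub i
  have hcard : (Finset.univ.biUnion F).card = b * J := by
    rw [Finset.card_biUnion fun i _ j _ hij => hdis i j hij]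
    simp [hc, Finset.sum_const, Finset.card_univ, mul_comm]
  apply Finset.eq_of_subset_of_card_le hsub'
  rw [hcard, Nat.card_Icc]
  omega

lemma even_extract {a J : ℕ} (ha : 0 < a) (hJ : 0 < J)
    (hne : {n | 0 < n ∧ ∃ F : Fin a → Finset ℕ, IsDGR a J n F}.Nonempty)
    (hH : H a J ≤ a * J + 1) :
    Tiles a J (Icc 1 (a * J)) ∨
      ∃ m, 2 ≤ m ∧ m ≤ a * J ∧ Tiles a J (Icc 1 (a * J + 1) \ {m}) := by
  have hmem := Nat.sInf_mem hne
  obtain ⟨hpos, F, hdgr⟩ := hmem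
  unfold H at hH
  have hdgr1 : IsDGR a J (a * J + 1) F := dgr_mono hdgr hH
  obtain ⟨hc, hg, hsub, hdis⟩ := hdgr1
  have hsubU : Finset.univ.biUnion F ⊆ Icc 1 (a * J + 1) :=
    Finset.biUnion_subset.mpr fun i _ => hsub i
  have hcardU : (Finset.univ.biUnion F).card = a * J := by
    rw [Finset.card_biUnion fun i _ j _ hij => hdis i j hij]
    simp [hc, Finset.sum_const, Finset.card_univ, mul_comm]
  have hcompl : (Icc 1 (a * J + 1) \ Finset.univ.biUnion F).card = 1 := by
    rw [Finset.card_sdiff_of_subset hsubU, hcardU, Nat.card_Icc]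
    omega
  obtain ⟨m, hm⟩ := Finset.card_eq_one.mp hcompl
  have hmIcc : m ∈ Icc 1 (a * J + 1) := by
    have : m ∈ Icc 1 (a * J + 1) \ Finset.univ.biUnion F := by
      rw [hm]; exact Finset.mem_singleton_self m
    exact (Finset.mem_sdiff.mp this).1
  rw [Finset.mem_Icc] at hmIcc
  have hUeq : Finset.univ.biUnion F = Icc 1 (a * J + 1) \ {m} := by
    rw [← hm, sdiff_sdiff_right_self]
    exact (Finset.inter_eq_right.mpr hsubU).symm
  have hTiles : Tiles a J (Icc 1 (a * J + 1) \ {m}) := ⟨F, hc, hg, hdis, hUeq⟩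
  by_cases hm1 : m = a * J + 1
  · left
    have hIcc : Icc 1 (a * J + 1) \ {m} = Icc 1 (a * J) := by
      subst hm1
      ext x
      simp only [Finset.mem_sdiff, Finset.mem_Icc, Finset.mem_singleton]
      omega
    rwa [hIcc] at hTiles
  by_cases hm2 : m = 1
  · left
    have hIcc : Icc 1 (a * J + 1) \ {m} = Icc 2 (a * J + 1) := by
      subst hm2
      ext x
      simp only [Finset.mem_sdiff, Finset.mem_Icc, Finset.mem_singleton]
      omega
    rw [hIcc] at hTiles
    exact tiles_shift_down hTiles
  · right
    exact ⟨m, by omega, by omega, hTiles⟩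

lemma tiles_zero {J : ℕ} : Tiles 0 J (Icc 1 0) := by
  refine ⟨Fin.elim0, fun i => i.elim0, fun i => i.elim0, fun i => i.elim0, ?_⟩
  simp

lemma tiles_nsmul {o J : ℕ} (ht : Tiles o J (Icc 1 (o * J))) :
    ∀ k, Tiles (k * o) J (Icc 1 (k * o * J)) := by
  intro k
  induction k with
  | zero => simpa using tiles_zero
  | succ k ih =>
    have := tiles_concat ih ht
    have he1 : (k + 1) * o = k * o + o := by ring
    have he2 : (k * o + o) * J = k * o * J + o * J := by ring
    rw [he1, he2]
    exact this

lemma dgr_nonempty_of_tiles {a n J N : ℕ} (h : Tiles n J (Icc 1 N)) (han : a ≤ n) :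
    {n' | 0 < n' ∧ ∃ F : Fin a → Finset ℕ, IsDGR a J n' F}.Nonempty := by
  obtain ⟨F, hc, hg, hdis, hun⟩ := h
  have hsub : ∀ i, F i ⊆ Icc 1 N := fun i =>
    hun ▸ Finset.subset_biUnion_of_mem F (Finset.mem_univ i)
  refine ⟨N + 1, Nat.succ_pos _, fun i => F (Fin.castLE han i), fun i => hc _, fun i => hg _,
    fun i => (hsub _).trans (Finset.Icc_subset_Icc le_rfl (Nat.le_succ _)), ?_⟩
  intro i j hij
  exact hdis _ _ fun hcon => hij (Fin.castLE_injective han hcon)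

end ARtoR

theorem almost_regular_to_regular (J I₁ I₂ : ℕ) (h1 : 0 < I₁) (h12 : I₁ < I₂)
    (hJ : 3 ≤ J)
    (heven : ∀ i, I₁ ≤ i → i ≤ I₂ → Even i → H i J ≤ i * J + 1)
    (hodd : ∀ i, I₁ ≤ i → i ≤ I₂ → Odd i → H i J = i * J) :
    ∀ I, 2 * I₁ ≤ I → I ≤ 2 * I₂ → H I J = I * J := by
  intro I hI1 hI2
  have hJ0 : 0 < J := by omega
  have hperf : ∀ k, I₁ ≤ k → k ≤ I₂ → Odd k → ARtoR.Tiles k J (Finset.Icc 1 (k * J)) :=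
    fun k ha hb hk => ARtoR.perfect_extract (by omega) hJ0 (hodd k ha hb hk)
  obtain ⟨o, ho1, ho2, hoo⟩ : ∃ o, I₁ ≤ o ∧ o ≤ I₂ ∧ Odd o := by
    rcases Nat.even_or_odd I₁ with he | ho
    · exact ⟨I₁ + 1, by omega, by omega, Even.add_one he⟩
    · exact ⟨I₁, le_rfl, by omega, ho⟩
  have hne : ∀ a : ℕ, 0 < a →
      {n | 0 < n ∧ ∃ F : Fin a → Finset ℕ, IsDGR a J n F}.Nonempty := by
    intro a ha
    have hto := ARtoR.tiles_nsmul (hperf o ho1 ho2 hoo) a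
    exact ARtoR.dgr_nonempty_of_tiles hto (Nat.le_mul_of_pos_right a (by omega))
  have heext : ∀ a, I₁ ≤ a → a ≤ I₂ → Even a →
      (ARtoR.Tiles a J (Finset.Icc 1 (a * J)) ∨
        ∃ m, 2 ≤ m ∧ m ≤ a * J ∧ ARtoR.Tiles a J (Finset.Icc 1 (a * J + 1) \ {m})) :=
    fun a ha hb hae =>
      ARtoR.even_extract (by omega) hJ0 (hne a (by omega)) (heven a ha hb hae)
  rcases Nat.even_or_odd I with hIe | hIo
  · -- I even, I = k + k
    obtain ⟨k, hk⟩ := hIe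
    subst hk
    have hkl : I₁ ≤ k := by omega
    have hkr : k ≤ I₂ := by omega
    have hgoalI : 0 < k + k := by omega
    rcases Nat.even_or_odd k with hke | hko
    · -- k even
      rcases heext k hkl hkr hke with hp | ⟨m, hm2, hmk, hhol⟩
      · have hfin := ARtoR.tiles_concat hp hp
        have hnum : k * J + k * J = (k + k) * J := by ring
        rw [hnum] at hfin
        exact ARtoR.H_eq_of_tiles hgoalI hJ0 hfin
      · -- two holed copies
        have hwlog : ∃ m', 2 ≤ m' ∧ m' + 1 ≤ k * J + 1 ∧ 2 * m' ≤ k * J + 2 ∧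
            ARtoR.Tiles k J (Finset.Icc 1 (k * J + 1) \ {m'}) := by
          by_cases hc : 2 * m ≤ k * J + 2
          · exact ⟨m, hm2, by omega, hc, hhol⟩
          · have href := ARtoR.tiles_reflect (by omega) (by omega) hhol
            refine ⟨k * J + 1 + 1 - m, by omega, by omega, by omega, href⟩
        obtain ⟨m', hm'2, hm'h, hm'w, hh⟩ := hwlog
        have hfin := ARtoR.combine_C3 hm'2 hm'h hm'w hh
        have hnum : k * J + 1 + (k * J + 1) - 2 = (k + k) * J := by
          have hX : (k + k) * J = k * J + k * J := by ring
          omega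
        rw [hnum] at hfin
        exact ARtoR.H_eq_of_tiles hgoalI hJ0 hfin
    · -- k odd : perfect
      have hp := hperf k hkl hkr hko
      have hfin := ARtoR.tiles_concat hp hp
      have hnum : k * J + k * J = (k + k) * J := by ring
      rw [hnum] at hfin
      exact ARtoR.H_eq_of_tiles hgoalI hJ0 hfin
  · -- I odd
    obtain ⟨k, hk⟩ := hIo
    subst hk
    have hkl : I₁ ≤ k := by omega
    have hkr : k + 1 ≤ I₂ := by omega
    have hgoalI : 0 < 2 * k + 1 := by omega
    have hB1 : (k + 1) * J = k * J + J := by ring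
    have hA1 : 1 * J ≤ k * J := Nat.mul_le_mul_right J (by omega)
    rw [one_mul] at hA1
    have hB2 : (2 * k + 1) * J = k * J + k * J + J := by ring
    have hieq : k + (k + 1) = 2 * k + 1 := by omega
    have hieq2 : k + 1 + k = 2 * k + 1 := by omega
    rcases Nat.even_or_odd k with hke | hko
    · -- k even (holed candidate), k+1 odd perfect
      have hb := hperf (k + 1) (by omega) hkr (Even.add_one hke)
      rcases heext k hkl (by omega) hke with hp | ⟨m, hm2, hmk, hhol⟩
      · have hfin := ARtoR.tiles_concat hp hb
        have hnum : k * J + (k + 1) * J = (2 * k + 1) * J := by omega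
        rw [hnum, hieq] at hfin
        exact ARtoR.H_eq_of_tiles hgoalI hJ0 hfin
      · have hfin := ARtoR.combine_L1 hm2 (by omega) (by omega)
          (by omega) (by omega) hhol hb
        have hnum : k * J + 1 + (k + 1) * J - 1 = (2 * k + 1) * J := by omega
        rw [hnum, hieq] at hfin
        exact ARtoR.H_eq_of_tiles hgoalI hJ0 hfin
    · -- k odd perfect, k+1 even holed candidate
      have hb := hperf k hkl (by omega) hko
      rcases heext (k + 1) (by omega) hkr (Odd.add_one hko) with hp | ⟨m, hm2, hmk, hhol⟩
      · have hfin := ARtoR.tiles_concat hp hb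
        have hnum : (k + 1) * J + k * J = (2 * k + 1) * J := by omega
        rw [hnum, hieq2] at hfin
        exact ARtoR.H_eq_of_tiles hgoalI hJ0 hfin
      · -- WLOG small hole
        have hwlog : ∃ m', 2 ≤ m' ∧ m' + 1 ≤ (k + 1) * J + 1 ∧ 2 * m' ≤ (k + 1) * J + 2 ∧
            ARtoR.Tiles (k + 1) J (Finset.Icc 1 ((k + 1) * J + 1) \ {m'}) := by
          by_cases hc : 2 * m ≤ (k + 1) * J + 2
          · exact ⟨m, hm2, by omega, hc, hhol⟩
          · have href := ARtoR.tiles_reflect (by omega) (by omega) hhol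
            refine ⟨(k + 1) * J + 1 + 1 - m, by omega, by omega, by omega, href⟩
        obtain ⟨m', hm'2, hm'h, hm'w, hh⟩ := hwlog
        by_cases hmJ : J ≤ m'
        · have hfin := ARtoR.combine_L1 hm'2 (by omega) (by omega)
            (by omega) (by omega) hh hb
          have hnum : (k + 1) * J + 1 + k * J - 1 = (2 * k + 1) * J := by omega
          rw [hnum, hieq2] at hfin
          exact ARtoR.H_eq_of_tiles hgoalI hJ0 hfin
        · have hfin := ARtoR.combine_LA hm'2 (by omega) (by omega)
            (by omega) hh hb
          have hnum : (k + 1) * J + 1 + k * J - 1 = (2 * k + 1) * J := by omega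
          rw [hnum, hieq2] at hfin
          exact ARtoR.H_eq_of_tiles hgoalI hJ0 hfin
end

section
/- For any integer J ≥ 3, H(2, J−1) ≤ H(1, J) + 1. -/
/-!
If `A ⊆ {1, …, n}` is a `J`-element Golomb ruler, then so is its translate `A + 1 ⊆ {1, …, n + 1}`,
and `A ∩ (A + 1)` has at most one element: two of its elements `x, y` would give the repeated
difference `x - (x - 1) = y - (y - 1)`. Removing one suitable element from each of `A` and `A + 1`
leaves two disjoint `(J - 1)`-element Golomb rulers in `{1, …, n + 1}`. That `H 1 J` is attained
at all (rather than being the junk value `sInf ∅ = 0`) is witnessed by the powers of two, whose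
differences `2 ^ a - 2 ^ b` (`b < a`) determine `a` because they lie in `[2 ^ (a - 1), 2 ^ a)`.
-/

open Finset

theorem exists_disjoint_erase_erase_of_card_inter_le_one {α : Type*} [DecidableEq α]
    {A B : Finset α} (hA : A.Nonempty) (hB : B.Nonempty) (h : #(A ∩ B) ≤ 1) :
    ∃ a ∈ A, ∃ b ∈ B, Disjoint (A.erase a) (B.erase b) := by
  rcases (A ∩ B).eq_empty_or_nonempty with hAB | ⟨x, hx⟩
  · obtain ⟨a, ha⟩ := hA
    obtain ⟨b, hb⟩ := hB
    exact ⟨a, ha, b, hb, (disjoint_iff_inter_eq_empty.2 hAB).mono (erase_subset _ _)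
      (erase_subset _ _)⟩
  · refine ⟨x, (mem_inter.1 hx).1, x, (mem_inter.1 hx).2, disjoint_left.2 fun y hyA hyB => ?_⟩
    exact ne_of_mem_erase hyA <|
      card_le_one.1 h y (mem_inter.2 ⟨mem_of_mem_erase hyA, mem_of_mem_erase hyB⟩) x hx

namespace IsGolomb

theorem of_add_eq_add {A : Finset ℕ}
    (h : ∀ a ∈ A, ∀ b ∈ A, ∀ c ∈ A, ∀ d ∈ A, b < a → d < c → a + d = c + b → a = c) :
    IsGolomb A := by
  intro a ha b hb c hc d hd hab hcd he
  rcases hab.lt_or_gt with hlt | hlt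
  · have := h b hb a ha d hd c hc hlt (by omega) (by omega)
    omega
  · have := h a ha b hb c hc d hd hlt (by omega) (by omega)
    omega

theorem mono {A B : Finset ℕ} (hA : IsGolomb A) (hBA : B ⊆ A) : IsGolomb B :=
  fun a ha b hb c hc d hd => hA a (hBA ha) b (hBA hb) c (hBA hc) d (hBA hd)

theorem image_add {A : Finset ℕ} (hA : IsGolomb A) (k : ℕ) : IsGolomb (A.image (· + k)) := by
  intro a ha b hb c hc d hd hab hcd he
  simp only [mem_image] at ha hb hc hd
  obtain ⟨a, ha, rfl⟩ := ha
  obtain ⟨b, hb, rfl⟩ := hb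
  obtain ⟨c, hc, rfl⟩ := hc
  obtain ⟨d, hd, rfl⟩ := hd
  have := hA a ha b hb c hc d hd (by omega) (by omega) (by push_cast at he; linarith)
  omega

theorem card_inter_image_add_le_one {A : Finset ℕ} (hA : IsGolomb A) {k : ℕ} (hk : k ≠ 0) :
    #(A ∩ A.image (· + k)) ≤ 1 := by
  refine card_le_one.2 fun x hx y hy => ?_
  simp only [mem_inter, mem_image] at hx hy
  obtain ⟨hxA, x', hx'A, rfl⟩ := hx
  obtain ⟨hyA, y', hy'A, rfl⟩ := hy
  have := hA _ hxA _ hx'A _ hyA _ hy'A (by omega) (by omega) (by push_cast; ring)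
  exact this.1

end IsGolomb

theorem eq_of_two_pow_add_two_pow_eq {a b c d : ℕ} (hba : b < a) (hdc : d < c)
    (h : 2 ^ a + 2 ^ d = 2 ^ c + 2 ^ b) : a = c := by
  wlog hac : a ≤ c generalizing a b c d
  · exact (this hdc hba h.symm (by omega)).symm
  by_contra hne
  have hsum : 2 ^ a + 2 ^ d ≤ 2 ^ (c - 1) + 2 ^ (c - 1) :=
    add_le_add (Nat.pow_le_pow_right two_pos (by omega)) (Nat.pow_le_pow_right two_pos (by omega))
  have hc : 2 ^ (c - 1) + 2 ^ (c - 1) = 2 ^ c := by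
    rw [← two_mul, ← pow_succ']
    congr 1
    omega
  have := Nat.two_pow_pos b
  omega

theorem isGolomb_image_two_pow (J : ℕ) : IsGolomb ((range J).image (2 ^ ·)) := by
  refine IsGolomb.of_add_eq_add fun a ha b hb c hc d hd hba hdc h => ?_
  simp only [mem_image] at ha hb hc hd
  obtain ⟨i, -, rfl⟩ := ha
  obtain ⟨j, -, rfl⟩ := hb
  obtain ⟨k, -, rfl⟩ := hc
  obtain ⟨l, -, rfl⟩ := hd
  rw [Nat.pow_lt_pow_iff_right one_lt_two] at hba hdc
  rw [eq_of_two_pow_add_two_pow_eq hba hdc h]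

theorem isDGR_one_image_two_pow (J : ℕ) : IsDGR 1 J (2 ^ J) fun _ => (range J).image (2 ^ ·) := by
  refine ⟨fun _ => ?_, fun _ => isGolomb_image_two_pow J, fun _ => ?_, fun i j hij => ?_⟩
  · rw [card_image_of_injective _ (Nat.pow_right_injective le_rfl), card_range]
  · intro x hx
    obtain ⟨k, hk, rfl⟩ := mem_image.1 hx
    exact mem_Icc.2 ⟨Nat.one_le_two_pow, Nat.pow_le_pow_right two_pos (mem_range.1 hk).le⟩
  · exact absurd (Subsingleton.elim i j) hij

theorem H_le_of_isDGR {I J n : ℕ} {F : Fin I → Finset ℕ} (hn : 0 < n) (hF : IsDGR I J n F) :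
    H I J ≤ n :=
  Nat.sInf_le ⟨hn, F, hF⟩

theorem exists_isDGR_H_of_isDGR {I J n : ℕ} {F : Fin I → Finset ℕ} (hn : 0 < n)
    (hF : IsDGR I J n F) : ∃ G, IsDGR I J (H I J) G :=
  (Nat.sInf_mem (s := {n | 0 < n ∧ ∃ F, IsDGR I J n F}) ⟨n, hn, F, hF⟩).2

theorem isDGR_pair {P Q : Finset ℕ} {J n : ℕ} (hP : IsGolomb P) (hQ : IsGolomb Q)
    (hPcard : #P = J) (hQcard : #Q = J) (hPsub : P ⊆ Icc 1 n) (hQsub : Q ⊆ Icc 1 n)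
    (hPQ : Disjoint P Q) : IsDGR 2 J n ![P, Q] := by
  refine ⟨Fin.forall_fin_two.2 ⟨hPcard, hQcard⟩, Fin.forall_fin_two.2 ⟨hP, hQ⟩,
    Fin.forall_fin_two.2 ⟨hPsub, hQsub⟩, ?_⟩
  simp only [Fin.forall_fin_two]
  exact ⟨⟨absurd rfl, fun _ => hPQ⟩, fun _ => hPQ.symm, absurd rfl⟩

theorem IsGolomb.exists_isDGR_two {A : Finset ℕ} {J n : ℕ} (hA : IsGolomb A) (hJ : 1 ≤ J)
    (hcard : #A = J) (hsub : A ⊆ Icc 1 n) : ∃ F, IsDGR 2 (J - 1) (n + 1) F := by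
  set B := A.image (· + 1)
  have hBcard : #B = J := by rw [card_image_of_injective _ (add_left_injective 1), hcard]
  have hAsub : A ⊆ Icc 1 (n + 1) := hsub.trans (Icc_subset_Icc_right n.le_succ)
  have hBsub : B ⊆ Icc 1 (n + 1) := by
    intro x hx
    obtain ⟨a, ha, rfl⟩ := mem_image.1 hx
    have := mem_Icc.1 (hsub ha)
    exact mem_Icc.2 ⟨by omega, by omega⟩
  obtain ⟨a, ha, b, hb, hdisj⟩ := exists_disjoint_erase_erase_of_card_inter_le_one
    (card_pos.1 (by omega)) (card_pos.1 (by rw [hBcard]; omega))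
    (hA.card_inter_image_add_le_one one_ne_zero)
  exact ⟨_, isDGR_pair (hA.mono (erase_subset a A)) ((hA.image_add 1).mono (erase_subset b B))
    (by rw [card_erase_of_mem ha, hcard]) (by rw [card_erase_of_mem hb, hBcard])
    ((erase_subset a A).trans hAsub) ((erase_subset b B).trans hBsub) hdisj⟩

theorem H_two_Jsub1 (J : ℕ) (hJ : 3 ≤ J) : H 2 (J - 1) ≤ H 1 J + 1 := by
  obtain ⟨F, hcard, hgolomb, hsub, -⟩ :=
    exists_isDGR_H_of_isDGR (Nat.two_pow_pos J) (isDGR_one_image_two_pow J)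
  obtain ⟨G, hG⟩ := (hgolomb 0).exists_isDGR_two (by omega) (hcard 0) (hsub 0)
  exact H_le_of_isDGR (by omega) hG
end
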